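/- arXiv:1808.08365 — 6 statements merged into one kernel-verified Lean document; each statement's English description precedes it below -/
import Mathlib

section
/- Let α ∈ (0,1) and let n ≥ 2 be an integer. Let ℰ0, ℰ1 : [0,1) → ℂ satisfy the data assumptions with this α, and let m1 = lim_{x↓0} x^α ℰ0'(x) and m2 = lim_{y↓0} y^α ℰ1'(y). If ℰ is a C^n-solution of the Goursat problem for the hyperbolic Ernst equation in D with data {ℰ0, ℰ1} (with the same exponent α in the solution's regularity condition), then for each y ∈ [0,1): lim_{x↓0} x^α ℰ_x(x,y) = m1 · exp(i ∫_0^y (Im ℰ1'(y')/Re ℰ1(y')) dy') · Re ℰ1(y) / √(1−y), and for each x ∈ [0,1): lim_{y↓0} y^α ℰ_y(x,y) = m2 · exp(i ∫_0^x (Im ℰ0'(x')/Re ℰ0(x')) dx') · Re ℰ0(x) / √(1−x). In particular, lim_{x↓0} x^α |ℰ_x(x,y)| = |m1| Re ℰ1(y)/√(1−y) and lim_{y↓0} y^α |ℰ_y(x,y)| = |m2| Re ℰ0(x)/√(1−x). -/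
open Complex Set MeasureTheory Topology Filter ComplexConjugate

noncomputable section

/-- The triangle `D = {(x,y) : 0 ≤ x, 0 ≤ y, x + y < 1}`. -/
def TriD : Set (ℝ × ℝ) := {p | 0 ≤ p.1 ∧ 0 ≤ p.2 ∧ p.1 + p.2 < 1}

/-- Partial derivative in the first variable. -/
def pdx (f : ℝ → ℝ → ℂ) (x y : ℝ) : ℂ := deriv (fun t => f t y) x

/-- Partial derivative in the second variable. -/
def pdy (f : ℝ → ℝ → ℂ) (x y : ℝ) : ℂ := deriv (fun t => f x t) y

/-- Mixed second partial derivative. -/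
def pdxy (f : ℝ → ℝ → ℂ) (x y : ℝ) : ℂ := pdx (fun a b => pdy f a b) x y

/-- Partial derivative in the first variable (real valued). -/
def pdxR (f : ℝ → ℝ → ℝ) (x y : ℝ) : ℝ := deriv (fun t => f t y) x

/-- Partial derivative in the second variable (real valued). -/
def pdyR (f : ℝ → ℝ → ℝ) (x y : ℝ) : ℝ := deriv (fun t => f x t) y

/-- Mixed second partial derivative (real valued). -/
def pdxyR (f : ℝ → ℝ → ℝ) (x y : ℝ) : ℝ := pdxR (fun a b => pdyR f a b) x y

/-- The hyperbolic Ernst equation at a point. -/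
def ErnstEqAt (E : ℝ → ℝ → ℂ) (x y : ℝ) : Prop :=
  (((E x y).re : ℂ)) * (pdxy E x y - (pdx E x y + pdy E x y) / (2 * (1 - x - y))) =
    pdx E x y * pdy E x y

/-- The Euler–Darboux equation at a point. -/
def EulerDarbouxAt (V : ℝ → ℝ → ℝ) (x y : ℝ) : Prop :=
  pdxyR V x y - (pdxR V x y + pdyR V x y) / (2 * (1 - x - y)) = 0

/-- `λ(x,y,k) = √((k-(1-y))/(k-x))`, principal branch (`Re λ > 0` off the cut). -/
def lam (x y : ℝ) (k : ℂ) : ℂ := ((k - (1 - (y : ℂ))) / (k - (x : ℂ))) ^ (1/2 : ℂ)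

/-- The segment `[0,1]` inside `ℂ`. -/
def seg01 : Set ℂ := (fun t : ℝ => (t : ℂ)) '' Icc 0 1

/-- A `C^n`-solution of the Goursat problem for the hyperbolic Ernst equation in `D`
with data `{E0, E1}`, with regularity exponent `α`. -/
def ErnstSolutionWith (n : ℕ) (α : ℝ) (E : ℝ → ℝ → ℂ) (E0 E1 : ℝ → ℂ) : Prop :=
  ContinuousOn (fun p : ℝ × ℝ => E p.1 p.2) TriD ∧
  ContDiffOn ℝ n (fun p : ℝ × ℝ => E p.1 p.2) (interior TriD) ∧
  (∀ p ∈ interior TriD, ErnstEqAt E p.1 p.2) ∧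
  (∃ g : ℝ × ℝ → ℂ, ContinuousOn g TriD ∧
      ∀ p ∈ interior TriD, g p = ((p.1 ^ α : ℝ) : ℂ) * pdx E p.1 p.2) ∧
  (∃ g : ℝ × ℝ → ℂ, ContinuousOn g TriD ∧
      ∀ p ∈ interior TriD, g p = ((p.2 ^ α : ℝ) : ℂ) * pdy E p.1 p.2) ∧
  (∃ g : ℝ × ℝ → ℂ, ContinuousOn g TriD ∧
      ∀ p ∈ interior TriD, g p = ((p.1 ^ α * p.2 ^ α : ℝ) : ℂ) * pdxy E p.1 p.2) ∧
  (∀ x ∈ Ico (0:ℝ) 1, E x 0 = E0 x) ∧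
  (∀ y ∈ Ico (0:ℝ) 1, E 0 y = E1 y) ∧
  (∀ p ∈ TriD, 0 < (E p.1 p.2).re)

/-- A `C^n`-solution of the Goursat problem for the hyperbolic Ernst equation in `D`
(with regularity exponent `α` existentially quantified over `[0,1)`). -/
def ErnstSolution (n : ℕ) (E : ℝ → ℝ → ℂ) (E0 E1 : ℝ → ℂ) : Prop :=
  ∃ α ∈ Ico (0:ℝ) 1, ErnstSolutionWith n α E E0 E1

/-- A `C^n`-solution of the Goursat problem for the Euler–Darboux equation in `D`
with data `{V0, V1}`, with regularity exponent `α`. -/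
def EDSolutionWith (n : ℕ) (α : ℝ) (V : ℝ → ℝ → ℝ) (V0 V1 : ℝ → ℝ) : Prop :=
  ContinuousOn (fun p : ℝ × ℝ => V p.1 p.2) TriD ∧
  ContDiffOn ℝ n (fun p : ℝ × ℝ => V p.1 p.2) (interior TriD) ∧
  (∀ p ∈ interior TriD, EulerDarbouxAt V p.1 p.2) ∧
  (∃ g : ℝ × ℝ → ℝ, ContinuousOn g TriD ∧
      ∀ p ∈ interior TriD, g p = p.1 ^ α * pdxR V p.1 p.2) ∧
  (∃ g : ℝ × ℝ → ℝ, ContinuousOn g TriD ∧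
      ∀ p ∈ interior TriD, g p = p.2 ^ α * pdyR V p.1 p.2) ∧
  (∃ g : ℝ × ℝ → ℝ, ContinuousOn g TriD ∧
      ∀ p ∈ interior TriD, g p = p.1 ^ α * p.2 ^ α * pdxyR V p.1 p.2) ∧
  (∀ x ∈ Ico (0:ℝ) 1, V x 0 = V0 x) ∧
  (∀ y ∈ Ico (0:ℝ) 1, V 0 y = V1 y)

/-- A `C^n`-solution of the Goursat problem for the Euler–Darboux equation in `D`. -/
def EDSolution (n : ℕ) (V : ℝ → ℝ → ℝ) (V0 V1 : ℝ → ℝ) : Prop :=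
  ∃ α ∈ Ico (0:ℝ) 1, EDSolutionWith n α V V0 V1

/-- The data assumptions (1.5) on a single boundary datum for the Ernst equation. -/
def ErnstData (n : ℕ) (α : ℝ) (E0 : ℝ → ℂ) : Prop :=
  ContinuousOn E0 (Ico 0 1) ∧ ContDiffOn ℝ n E0 (Ioo 0 1) ∧
  (∃ g : ℝ → ℂ, ContinuousOn g (Ico 0 1) ∧
      ∀ x ∈ Ioo (0:ℝ) 1, g x = ((x ^ α : ℝ) : ℂ) * deriv E0 x) ∧
  E0 0 = 1 ∧ (∀ x ∈ Ico (0:ℝ) 1, 0 < (E0 x).re)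

/-- The data assumptions on a single boundary datum for the Euler–Darboux equation. -/
def EDData (n : ℕ) (α : ℝ) (V0 : ℝ → ℝ) : Prop :=
  ContinuousOn V0 (Ico 0 1) ∧ ContDiffOn ℝ n V0 (Ioo 0 1) ∧
  (∃ g : ℝ → ℝ, ContinuousOn g (Ico 0 1) ∧
      ∀ x ∈ Ioo (0:ℝ) 1, g x = x ^ α * deriv V0 x) ∧
  V0 0 = 0

/-- The matrix `U0(x,k)` of the x-part of the Lax pair, built from the boundary datum. -/
def U0mat (E0 : ℝ → ℂ) (x : ℝ) (k : ℂ) : Matrix (Fin 2) (Fin 2) ℂ :=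
  (1 / (2 * ((E0 x).re : ℂ))) •
    !![conj (deriv E0 x), lam x 0 k * conj (deriv E0 x);
       lam x 0 k * deriv E0 x, deriv E0 x]

/-- The matrix `U(x,y,k)` of the Lax pair. -/
def Umat (E : ℝ → ℝ → ℂ) (k : ℂ) (x y : ℝ) : Matrix (Fin 2) (Fin 2) ℂ :=
  (1 / (2 * ((E x y).re : ℂ))) •
    !![conj (pdx E x y), lam x y k * conj (pdx E x y);
       lam x y k * pdx E x y, pdx E x y]

/-- The matrix `V(x,y,k)` of the Lax pair. -/
def Vmat (E : ℝ → ℝ → ℂ) (k : ℂ) (x y : ℝ) : Matrix (Fin 2) (Fin 2) ℂ :=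
  (1 / (2 * ((E x y).re : ℂ))) •
    !![conj (pdy E x y), (lam x y k)⁻¹ * conj (pdy E x y);
       (lam x y k)⁻¹ * pdy E x y, pdy E x y]

/-!
Write `g` for the continuous extension of `x^α ∂ₓE` to `D` and `h(y) = g(0, y)` for its trace on
the edge `x = 0`. Derivatives pass to the limit on that edge, because the interior derivatives
along the lines `x = const` converge locally uniformly as `x → 0`: hence `E₁' = lim ∂ᵧE(x, ·)`
and `h' = lim x^α ∂ₓ∂ᵧE(x, ·)`; on the edge `y = 0` the trace of `x^α ∂ₓE` is `x^α E₀'`, so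
`h(0) = m₁`. Multiplying the Ernst equation by `x^α` and letting `x → 0` turns it into the linear
ODE `h' = h (E₁' / Re E₁ + 1 / (2(1 - y)))`. Since `E₁' / Re E₁ = (log Re E₁)' + i Im E₁' / Re E₁`,
it integrates to `h(y) = m₁ exp(i ∫₀ʸ Im E₁' / Re E₁) Re E₁(y) / √(1 - y)`. Exchanging `x` and `y`
preserves the Ernst equation and gives the statement for `y^α ∂ᵧE`.
-/

theorem interior_TriD : interior TriD = {p : ℝ × ℝ | 0 < p.1 ∧ 0 < p.2 ∧ p.1 + p.2 < 1} := by
  have hD : TriD = Ici 0 ×ˢ Ici 0 ∩ {p : ℝ × ℝ | p.1 + p.2 < 1} := by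
    ext p; simp only [TriD, mem_inter_iff, mem_prod, mem_Ici, mem_ofPred_eq, and_assoc]
  rw [hD, interior_inter, interior_prod_eq, interior_Ici,
    (isOpen_lt (by fun_prop) continuous_const).interior_eq]
  ext p; simp only [mem_inter_iff, mem_prod, mem_Ioi, mem_ofPred_eq, and_assoc]

theorem mem_interior_TriD {p : ℝ × ℝ} :
    p ∈ interior TriD ↔ 0 < p.1 ∧ 0 < p.2 ∧ p.1 + p.2 < 1 := by
  rw [interior_TriD]; rfl

theorem swap_mem_TriD {p : ℝ × ℝ} : p.swap ∈ TriD ↔ p ∈ TriD := by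
  simp only [TriD, mem_ofPred_eq, Prod.fst_swap, Prod.snd_swap, add_comm p.2]; tauto

theorem swap_mem_interior_TriD {p : ℝ × ℝ} : p.swap ∈ interior TriD ↔ p ∈ interior TriD := by
  simp only [interior_TriD, mem_ofPred_eq, Prod.fst_swap, Prod.snd_swap, add_comm p.2]; tauto

theorem ContinuousOn.tendsto_nhdsGT_TriD {X : Type*} [TopologicalSpace X] {g : ℝ × ℝ → X}
    (hg : ContinuousOn g TriD) {y : ℝ} (hy : y ∈ Ico 0 1) :
    Tendsto (fun x => g (x, y)) (𝓝[>] 0) (𝓝 (g (0, y))) := by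
  have hy' : (0 : ℝ) < 1 - y := by linarith [hy.2]
  have hslice : ContinuousOn (fun x => g (x, y)) (Ico 0 (1 - y)) :=
    hg.comp (by fun_prop) fun x hx => ⟨hx.1, hy.1, by linarith [hx.2]⟩
  exact (hslice 0 ⟨le_rfl, hy'⟩).tendsto.mono_left
    (nhdsWithin_le_of_mem (mem_of_superset (Ioo_mem_nhdsGT hy') Ioo_subset_Ico_self))

theorem eventually_nhdsGT_mem_interior_TriD {y : ℝ} (hy : y ∈ Ioo 0 1) :
    ∀ᶠ x in 𝓝[>] 0, (x, y) ∈ interior TriD := by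
  filter_upwards [Ioo_mem_nhdsGT (show (0 : ℝ) < 1 - y by linarith [hy.2])] with x hx
  exact mem_interior_TriD.2 ⟨hx.1, hy.1, by linarith [hx.2]⟩

theorem IsCompact.tendstoUniformlyOn_nhdsWithin {X Y F : Type*} [TopologicalSpace X]
    [TopologicalSpace Y] [PseudoMetricSpace F] {f : X × Y → F} {s : Set X} {k : Set Y} {q : X}
    (hk : IsCompact k) (hf : ContinuousOn f (s ×ˢ k)) (hq : q ∈ s) :
    TendstoUniformlyOn (fun x t => f (x, t)) (fun t => f (q, t)) (𝓝[s] q) k := by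
  rw [Metric.tendstoUniformlyOn_iff]
  intro ε hε
  obtain ⟨v, hv, hvk⟩ := hk.mem_uniformity_of_prod (f := fun x t => f (x, t)) hf hq
    (Metric.dist_mem_uniformity hε)
  filter_upwards [hv] with x hx t ht
  rw [dist_comm]
  exact hvk x hx t ht

theorem hasDerivAt_edge_of_continuousOn_Icc_prod {F : Type*} [NormedAddCommGroup F]
    [NormedSpace ℝ F] {u v : ℝ × ℝ → F} {δ a b y : ℝ} (hδ : 0 < δ) (hy : y ∈ Ioo a b)
    (hu : ContinuousOn u (Icc 0 δ ×ˢ Icc a b)) (hv : ContinuousOn v (Icc 0 δ ×ˢ Icc a b))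
    (hd : ∀ x ∈ Ioc 0 δ, ∀ t ∈ Ioo a b, HasDerivAt (fun s => u (x, s)) (v (x, t)) t) :
    HasDerivAt (fun s => u (0, s)) (v (0, y)) y := by
  have hδ' : 𝓝[>] (0 : ℝ) ≤ 𝓝[Icc 0 δ] 0 :=
    nhdsWithin_le_of_mem (mem_of_superset (Ioc_mem_nhdsGT hδ) Ioc_subset_Icc_self)
  have h0 : (0 : ℝ) ∈ Icc 0 δ := left_mem_Icc.2 hδ.le
  have hvunif : TendstoUniformlyOn (fun x t => v (x, t)) (fun t => v (0, t)) (𝓝[>] 0)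
      (Ioo a b) := fun w hw =>
    hδ' ((isCompact_Icc.tendstoUniformlyOn_nhdsWithin hv h0).mono Ioo_subset_Icc_self w hw)
  refine hasDerivAt_of_tendstoUniformlyOn (f := fun x s => u (x, s)) isOpen_Ioo hvunif ?_
    (fun t ht => ?_) hy
  · filter_upwards [Ioc_mem_nhdsGT hδ] with x hx t ht using hd x hx t ht
  · exact ((isCompact_Icc.tendstoUniformlyOn_nhdsWithin hu h0).tendsto_at
      (Ioo_subset_Icc_self ht)).mono_left hδ'

theorem hasDerivAt_edge_of_continuousOn_TriD {F : Type*} [NormedAddCommGroup F]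
    [NormedSpace ℝ F] {u v : ℝ × ℝ → F} (hu : ContinuousOn u TriD)
    (hv : ContinuousOn v (TriD ∩ {p | 0 < p.2}))
    (hd : ∀ p ∈ interior TriD, HasDerivAt (fun t => u (p.1, t)) (v p) p.2)
    {y : ℝ} (hy : y ∈ Ioo 0 1) :
    HasDerivAt (fun t => u (0, t)) (v (0, y)) y := by
  obtain ⟨hy0, hy1⟩ := hy
  have hR : Icc 0 ((1 - y) / 4) ×ˢ Icc (y / 2) ((1 + y) / 2) ⊆ TriD ∩ {p | 0 < p.2} := by
    rintro ⟨x, t⟩ ⟨⟨hx0, hx1⟩, ht0, ht1⟩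
    dsimp only at hx0 hx1 ht0 ht1
    exact ⟨⟨hx0, show 0 ≤ t by linarith, show x + t < 1 by linarith⟩, show 0 < t by linarith⟩
  refine hasDerivAt_edge_of_continuousOn_Icc_prod (by linarith) ⟨by linarith, by linarith⟩
    (hu.mono (hR.trans inter_subset_left)) (hv.mono hR) fun x hx t ht => hd (x, t)
      (mem_interior_TriD.2 ⟨hx.1, show 0 < t by linarith [ht.1], show x + t < 1 by
        linarith [hx.2, ht.2]⟩)

theorem ContinuousOn.rpow_neg_snd_mul {g : ℝ × ℝ → ℂ} {s : Set (ℝ × ℝ)}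
    (hg : ContinuousOn g s) (α : ℝ) :
    ContinuousOn (fun p => ((p.2 ^ (-α) : ℝ) : ℂ) * g p) (s ∩ {p | 0 < p.2}) :=
  (continuous_ofReal.comp_continuousOn
    (continuousOn_snd.rpow_const fun _ hp => Or.inl hp.2.ne')).mul (hg.mono inter_subset_left)

theorem ofReal_rpow_neg_mul_rpow_mul {t : ℝ} (ht : 0 < t) (α : ℝ) (z : ℂ) :
    ((t ^ (-α) : ℝ) : ℂ) * (((t ^ α : ℝ) : ℂ) * z) = z := by
  rw [← mul_assoc, ← ofReal_mul, ← Real.rpow_add ht, neg_add_cancel, Real.rpow_zero,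
    ofReal_one, one_mul]

section Partials

variable {G : Type*} [NormedAddCommGroup G] [NormedSpace ℝ G]

theorem DifferentiableAt.hasDerivAt_comp_mk_left {F : ℝ × ℝ → G} {q : ℝ × ℝ}
    (hF : DifferentiableAt ℝ F q) :
    HasDerivAt (fun t => F (t, q.2)) (fderiv ℝ F q (1, 0)) q.1 :=
  hF.hasFDerivAt.comp_hasDerivAt q.1 ((hasDerivAt_id q.1).prodMk (hasDerivAt_const q.1 q.2))

theorem DifferentiableAt.hasDerivAt_comp_mk_right {F : ℝ × ℝ → G} {q : ℝ × ℝ}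
    (hF : DifferentiableAt ℝ F q) :
    HasDerivAt (fun t => F (q.1, t)) (fderiv ℝ F q (0, 1)) q.2 :=
  hF.hasFDerivAt.comp_hasDerivAt q.2 ((hasDerivAt_const q.2 q.1).prodMk (hasDerivAt_id q.2))

end Partials

section ContDiffOn

variable {f : ℝ → ℝ → ℂ} {U : Set (ℝ × ℝ)} {p : ℝ × ℝ}

theorem ContDiffOn.hasDerivAt_pdx (hU : IsOpen U)
    (hf : ContDiffOn ℝ 1 (fun q : ℝ × ℝ => f q.1 q.2) U) (hp : p ∈ U) :
    HasDerivAt (fun t => f t p.2) (pdx f p.1 p.2) p.1 :=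
  ((hf.differentiableOn one_ne_zero).differentiableAt (hU.mem_nhds hp)).hasDerivAt_comp_mk_left
    |>.differentiableAt.hasDerivAt

theorem ContDiffOn.hasDerivAt_pdy (hU : IsOpen U)
    (hf : ContDiffOn ℝ 1 (fun q : ℝ × ℝ => f q.1 q.2) U) (hp : p ∈ U) :
    HasDerivAt (fun t => f p.1 t) (pdy f p.1 p.2) p.2 :=
  ((hf.differentiableOn one_ne_zero).differentiableAt (hU.mem_nhds hp)).hasDerivAt_comp_mk_right
    |>.differentiableAt.hasDerivAt

/-- Symmetry of mixed partials: `pdxy f = ∂ₓ (∂ᵧ f)` is also `∂ᵧ (∂ₓ f)`. -/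
theorem ContDiffOn.hasDerivAt_pdx_right (hU : IsOpen U)
    (hf : ContDiffOn ℝ 2 (fun q : ℝ × ℝ => f q.1 q.2) U) (hp : p ∈ U) :
    HasDerivAt (fun t => pdx f p.1 t) (pdxy f p.1 p.2) p.2 := by
  set F : ℝ × ℝ → ℂ := fun q => f q.1 q.2
  have hFp : ContDiffAt ℝ 2 F p := hf.contDiffAt (hU.mem_nhds hp)
  have hF'p : DifferentiableAt ℝ (fderiv ℝ F) p :=
    (hFp.fderiv_right (m := 1) le_rfl).differentiableAt one_ne_zero
  have hFU : ∀ q ∈ U, DifferentiableAt ℝ F q := fun q hq =>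
    (hf.differentiableOn two_ne_zero).differentiableAt (hU.mem_nhds hq)
  have hpdx : (fun t => pdx f p.1 t) =ᶠ[𝓝 p.2] fun t => fderiv ℝ F (p.1, t) (1, 0) := by
    filter_upwards [(continuous_const.prodMk continuous_id).continuousAt.preimage_mem_nhds
      (hU.mem_nhds hp)] with t ht
    exact (hFU _ ht).hasDerivAt_comp_mk_left.deriv
  have hpdy : (fun s => pdy f s p.2) =ᶠ[𝓝 p.1] fun s => fderiv ℝ F (s, p.2) (0, 1) := by
    filter_upwards [(continuous_id.prodMk continuous_const).continuousAt.preimage_mem_nhds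
      (hU.mem_nhds hp)] with s hs
    exact (hFU _ hs).hasDerivAt_comp_mk_right.deriv
  have hxy : pdxy f p.1 p.2 = fderiv ℝ (fderiv ℝ F) p (1, 0) (0, 1) :=
    (((ContinuousLinearMap.apply ℝ ℂ ((0 : ℝ), (1 : ℝ))).hasFDerivAt.comp_hasDerivAt p.1
      hF'p.hasDerivAt_comp_mk_left).congr_of_eventuallyEq hpdy).deriv
  rw [hxy, hFp.isSymmSndFDerivAt (by simp)]
  exact ((ContinuousLinearMap.apply ℝ ℂ ((1 : ℝ), (0 : ℝ))).hasFDerivAt.comp_hasDerivAt p.2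
    hF'p.hasDerivAt_comp_mk_right).congr_of_eventuallyEq hpdx

end ContDiffOn

theorem eq_mul_exp_sub_of_hasDerivAt {h Φ φ : ℝ → ℂ} {a b : ℝ} (hab : a ≤ b)
    (hh : ContinuousOn h (Icc a b)) (hΦ : ContinuousOn Φ (Icc a b))
    (hhd : ∀ t ∈ Ioo a b, HasDerivAt h (h t * φ t) t)
    (hΦd : ∀ t ∈ Ioo a b, HasDerivAt Φ (φ t) t) :
    h b = h a * exp (Φ b - Φ a) := by
  have hconst : ∫ _ in a..b, (0 : ℂ) = h b * exp (-Φ b) - h a * exp (-Φ a) := by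
    refine intervalIntegral.integral_eq_sub_of_hasDerivAt_of_le hab (hh.mul hΦ.neg.cexp)
      (fun t ht => ?_) intervalIntegrable_const
    exact ((hhd t ht).mul (hΦd t ht).neg.cexp).congr_deriv (by ring)
  rw [intervalIntegral.integral_zero, eq_comm, sub_eq_zero] at hconst
  calc h b = h b * exp (-Φ b) * exp (Φ b) := by rw [mul_assoc, ← exp_add, neg_add_cancel,
        exp_zero, mul_one]
    _ = h a * exp (Φ b - Φ a) := by rw [hconst, mul_assoc, ← exp_add, neg_add_eq_sub]

theorem HasDerivAt.ofReal_log_re_add_I_mul {f : ℝ → ℂ} {θ : ℝ → ℝ} {f' : ℂ} {t : ℝ}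
    (hf : HasDerivAt f f' t) (hθ : HasDerivAt θ (f'.im / (f t).re) t) (ht : 0 < (f t).re) :
    HasDerivAt (fun s => ((Real.log (f s).re : ℝ) : ℂ) + I * θ s) (f' / (f t).re) t := by
  refine (((reCLM.hasFDerivAt.comp_hasDerivAt t hf).log ht.ne').ofReal_comp.add
    (hθ.ofReal_comp.const_mul I)).congr_deriv ?_
  have hre : ((f t).re : ℂ) ≠ 0 := ofReal_ne_zero.2 ht.ne'
  conv_rhs => rw [← re_add_im f']
  simp only [reCLM_apply, Function.comp_apply]
  push_cast
  field_simp

theorem hasDerivAt_integral_of_continuousOn_Ioo {F : Type*} [NormedAddCommGroup F]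
    [NormedSpace ℝ F] [CompleteSpace F] {θ : ℝ → F} {a b t : ℝ}
    (hint : IntervalIntegrable θ volume a b) (hθ : ContinuousOn θ (Ioo a b)) (ht : t ∈ Ioo a b) :
    HasDerivAt (fun s => ∫ u in a..s, θ u) (θ t) t :=
  intervalIntegral.integral_hasDerivAt_right (hint.mono_set (by
      rw [uIcc_of_le ht.1.le, uIcc_of_le (ht.1.trans ht.2).le]
      exact Icc_subset_Icc_right ht.2.le))
    (hθ.stronglyMeasurableAtFilter isOpen_Ioo t ht) (hθ.continuousAt (Ioo_mem_nhds ht.1 ht.2))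

theorem eq_of_hasDerivAt_eq_mul_deriv_div_re {f h : ℝ → ℂ} {y : ℝ} (hy : y ∈ Ico 0 1)
    (hf : ContinuousOn f (Icc 0 y)) (hfd : ∀ t ∈ Ioo 0 y, HasDerivAt f (deriv f t) t)
    (hf' : ContinuousOn (deriv f) (Ioo 0 y)) (hpos : ∀ t ∈ Icc 0 y, 0 < (f t).re)
    (hf0 : f 0 = 1) (hint : IntervalIntegrable (fun t => (deriv f t).im / (f t).re) volume 0 y)
    (hh : ContinuousOn h (Icc 0 y))
    (hhd : ∀ t ∈ Ioo 0 y, HasDerivAt h (h t * (deriv f t / (f t).re + 1 / (2 * (1 - t)))) t) :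
    h y = h 0 * exp (I * ((∫ t in (0 : ℝ)..y, (deriv f t).im / (f t).re : ℝ) : ℂ)) *
      ((f y).re : ℂ) / ((Real.sqrt (1 - y) : ℝ) : ℂ) := by
  set θ : ℝ → ℝ := fun t => (deriv f t).im / (f t).re
  -- `exp Φ = Re f · e^{i ∫ θ} / √(1 - t)`
  set Φ : ℝ → ℂ := fun t => ((Real.log (f t).re : ℝ) : ℂ) + I * ((∫ s in (0 : ℝ)..t, θ s : ℝ) : ℂ)
    - ((Real.log (1 - t) / 2 : ℝ) : ℂ)
  have h1 : ∀ t ∈ Icc 0 y, 1 - t ≠ 0 := fun t ht => by linarith [ht.2, hy.2]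
  have hΦ : ContinuousOn Φ (Icc 0 y) := by
    have hprim : ContinuousOn (fun t => ∫ s in (0 : ℝ)..t, θ s) (Icc 0 y) := by
      simpa [uIcc_of_le hy.1] using
        intervalIntegral.continuousOn_primitive_interval' hint left_mem_uIcc
    refine ((continuous_ofReal.comp_continuousOn ?_).add
      (continuousOn_const.mul (continuous_ofReal.comp_continuousOn hprim))).sub
      (continuous_ofReal.comp_continuousOn ?_)
    · exact (continuous_re.comp_continuousOn hf).log fun t ht => (hpos t ht).ne'
    · exact ((continuousOn_const.sub continuousOn_id).log h1).div_const 2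
  have hθ : ContinuousOn θ (Ioo 0 y) :=
    (continuous_im.comp_continuousOn hf').div (continuous_re.comp_continuousOn
      (hf.mono Ioo_subset_Icc_self)) fun s hs => (hpos s (Ioo_subset_Icc_self hs)).ne'
  have hΦd : ∀ t ∈ Ioo 0 y, HasDerivAt Φ (deriv f t / (f t).re + 1 / (2 * (1 - t))) t := by
    intro t ht
    have htI : t ∈ Icc 0 y := Ioo_subset_Icc_self ht
    have hlog : HasDerivAt (fun s => Real.log (1 - s)) (-1 / (1 - t)) t := by
      simpa using ((hasDerivAt_id t).const_sub 1).log (h1 t htI)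
    refine ((HasDerivAt.ofReal_log_re_add_I_mul (hfd t ht)
      (hasDerivAt_integral_of_continuousOn_Ioo hint hθ ht) (hpos t htI)).sub
      (hlog.div_const 2).ofReal_comp).congr_deriv ?_
    have h10 : (1 - t : ℂ) ≠ 0 := by exact_mod_cast h1 t htI
    push_cast
    field_simp
    ring
  have hsqrt : Real.exp (Real.log (1 - y) / 2) = Real.sqrt (1 - y) := by
    rw [Real.sqrt_eq_rpow, Real.rpow_def_of_pos (by linarith [hy.2]), mul_one_div]
  rw [eq_mul_exp_sub_of_hasDerivAt hy.1 hh hΦ hhd hΦd]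
  simp only [Φ, hf0, one_re, Real.log_one, sub_zero, zero_div, intervalIntegral.integral_same,
    ofReal_zero, mul_zero, add_zero, exp_sub, exp_add, ← ofReal_exp, hsqrt,
    Real.exp_log (hpos y (right_mem_Icc.2 hy.1))]
  ring

theorem ErnstData.intervalIntegrable_im_deriv_div_re {n : ℕ} {α : ℝ} {f : ℝ → ℂ}
    (hd : ErnstData n α f) (hα : α < 1) {y : ℝ} (hy : y ∈ Ico 0 1) :
    IntervalIntegrable (fun t => (deriv f t).im / (f t).re) volume 0 y := by
  obtain ⟨hf, -, ⟨g, hg, hgf⟩, -, hpos⟩ := hd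
  have hsub : uIcc 0 y ⊆ Ico 0 1 := by rw [uIcc_of_le hy.1]; exact Icc_subset_Ico_right hy.2
  refine ((intervalIntegral.intervalIntegrable_rpow' (r := -α) (by linarith)).mul_continuousOn
    (((continuous_im.comp_continuousOn hg).div (continuous_re.comp_continuousOn hf)
      fun t ht => (hpos t ht).ne').mono hsub)).congr_ae ?_
  rw [uIoc_of_le hy.1]
  refine (ae_restrict_iff' measurableSet_Ioc).2 (ae_of_all _ fun t ht => ?_)
  have ht0 : 0 < t := ht.1
  change t ^ (-α) * ((g t).im / (f t).re) = _
  rw [hgf t ⟨ht0, ht.2.trans_lt hy.2⟩, im_ofReal_mul, mul_div_assoc, ← mul_assoc,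
    ← Real.rpow_add ht0, neg_add_cancel, Real.rpow_zero, one_mul]

theorem ernstEqAt_edge_limit {E : ℝ → ℝ → ℂ} {α y r : ℝ} {A B C : ℂ} (hα : 0 < α) (hy : y < 1)
    (hE : ∀ᶠ x in 𝓝[>] 0, ErnstEqAt E x y)
    (hr : Tendsto (fun x => (E x y).re) (𝓝[>] 0) (𝓝 r))
    (hA : Tendsto (fun x => ((x ^ α : ℝ) : ℂ) * pdx E x y) (𝓝[>] 0) (𝓝 A))
    (hB : Tendsto (fun x => pdy E x y) (𝓝[>] 0) (𝓝 B))
    (hC : Tendsto (fun x => ((x ^ α : ℝ) : ℂ) * pdxy E x y) (𝓝[>] 0) (𝓝 C)) :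
    (r : ℂ) * (C - A / (2 * (1 - y))) = A * B := by
  have hxα : Tendsto (fun x : ℝ => ((x ^ α : ℝ) : ℂ)) (𝓝[>] 0) (𝓝 0) := by
    simpa [Real.zero_rpow hα.ne'] using
      ((Real.continuousAt_rpow_const 0 α (Or.inr hα.le)).tendsto.mono_left
        nhdsWithin_le_nhds).ofReal
  have hden : Tendsto (fun x : ℝ => 2 * (1 - (x : ℂ) - y)) (𝓝[>] 0) (𝓝 (2 * (1 - y))) := by
    simpa using ((by fun_prop : Continuous fun x : ℝ => 2 * (1 - (x : ℂ) - y)).tendsto 0).mono_left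
      nhdsWithin_le_nhds
  have hy' : (2 * (1 - y : ℂ)) ≠ 0 := by
    norm_cast; exact mul_ne_zero two_ne_zero (sub_ne_zero.2 hy.ne')
  have hlim := hr.ofReal.mul (hC.sub ((hA.add (hxα.mul hB)).div hden hy'))
  simp only [Pi.div_apply, zero_mul, add_zero] at hlim
  refine tendsto_nhds_unique (hlim.congr' ?_) (hA.mul hB)
  filter_upwards [hE] with x hx
  unfold ErnstEqAt at hx
  linear_combination ((x ^ α : ℝ) : ℂ) * hx

section ErnstSolution

variable {n : ℕ} {α : ℝ} {E : ℝ → ℝ → ℂ} {E0 E1 : ℝ → ℂ} {g : ℝ × ℝ → ℂ}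

theorem ErnstSolutionWith.swap (hn : 2 ≤ n) (hE : ErnstSolutionWith n α E E0 E1) :
    ErnstSolutionWith n α (fun x y => E y x) E1 E0 := by
  obtain ⟨hEc, hCn, hPDE, ⟨g1, hg1, hg1E⟩, ⟨g2, hg2, hg2E⟩, ⟨g3, hg3, hg3E⟩, hE0, hE1, hpos⟩ := hE
  have hsw : MapsTo Prod.swap TriD TriD := fun p hp => swap_mem_TriD.2 hp
  have hswi : MapsTo Prod.swap (interior TriD) (interior TriD) := fun p hp =>
    swap_mem_interior_TriD.2 hp
  have hxy : ∀ p ∈ interior TriD, pdxy (fun x y => E y x) p.1 p.2 = pdxy E p.2 p.1 :=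
    fun p hp => (ContDiffOn.hasDerivAt_pdx_right isOpen_interior
      (hCn.of_le (by exact_mod_cast hn)) (hswi hp)).deriv
  refine ⟨hEc.comp continuous_swap.continuousOn hsw,
    hCn.comp (contDiff_snd.prodMk contDiff_fst).contDiffOn hswi, fun p hp => ?_,
    ⟨fun p => g2 p.swap, hg2.comp continuous_swap.continuousOn hsw, fun p hp => hg2E _ (hswi hp)⟩,
    ⟨fun p => g1 p.swap, hg1.comp continuous_swap.continuousOn hsw, fun p hp => hg1E _ (hswi hp)⟩,
    ⟨fun p => g3 p.swap, hg3.comp continuous_swap.continuousOn hsw, fun p hp => ?_⟩,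
    hE1, hE0, fun p hp => hpos _ (hsw hp)⟩
  · have h := hPDE _ (hswi hp)
    unfold ErnstEqAt at h ⊢
    change ((E p.2 p.1).re : ℂ) * (pdxy (fun x y => E y x) p.1 p.2 -
      (pdy E p.2 p.1 + pdx E p.2 p.1) / (2 * (1 - p.1 - p.2))) = pdy E p.2 p.1 * pdx E p.2 p.1
    rw [hxy p hp]
    simp only [Prod.fst_swap, Prod.snd_swap] at h
    linear_combination h
  · simp only [hg3E _ (hswi hp), hxy p hp, Prod.fst_swap, Prod.snd_swap, mul_comm (p.2 ^ α)]

theorem ErnstSolutionWith.tendsto_pdy (hn : 1 ≤ n) (hE : ErnstSolutionWith n α E E0 E1) {y : ℝ}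
    (hy : y ∈ Ioo 0 1) : Tendsto (fun x => pdy E x y) (𝓝[>] 0) (𝓝 (deriv E1 y)) := by
  obtain ⟨hEc, hCn, -, -, ⟨g, hg, hgE⟩, -, -, hE1, -⟩ := hE
  have hedge : HasDerivAt (fun t => E 0 t) (((y ^ (-α) : ℝ) : ℂ) * g (0, y)) y := by
    refine hasDerivAt_edge_of_continuousOn_TriD (u := fun p => E p.1 p.2) hEc
      (hg.rpow_neg_snd_mul α) (fun p hp => ?_) hy
    rw [hgE p hp, ofReal_rpow_neg_mul_rpow_mul (mem_interior_TriD.1 hp).2.1]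
    exact (hCn.of_le (by exact_mod_cast hn)).hasDerivAt_pdy isOpen_interior hp
  have hE1' : deriv E1 y = ((y ^ (-α) : ℝ) : ℂ) * g (0, y) := by
    refine (hedge.congr_of_eventuallyEq ?_).deriv
    filter_upwards [Ioo_mem_nhds hy.1 hy.2] with t ht using (hE1 t ⟨ht.1.le, ht.2⟩).symm
  rw [hE1']
  refine ((hg.tendsto_nhdsGT_TriD ⟨hy.1.le, hy.2⟩).const_mul _).congr' ?_
  filter_upwards [eventually_nhdsGT_mem_interior_TriD hy] with x hx
  rw [hgE _ hx, ofReal_rpow_neg_mul_rpow_mul hy.1]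

theorem ErnstSolutionWith.extension_apply_snd_zero (hn : 2 ≤ n)
    (hE : ErnstSolutionWith n α E E0 E1) (hg : ContinuousOn g TriD)
    (hgE : ∀ p ∈ interior TriD, g p = ((p.1 ^ α : ℝ) : ℂ) * pdx E p.1 p.2)
    {x : ℝ} (hx : x ∈ Ioo 0 1) : g (x, 0) = ((x ^ α : ℝ) : ℂ) * deriv E0 x := by
  have hlim : Tendsto (fun y => g (x, y)) (𝓝[>] 0) (𝓝 (g (x, 0))) :=
    (hg.comp continuous_swap.continuousOn fun p hp => swap_mem_TriD.2 hp).tendsto_nhdsGT_TriD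
      ⟨hx.1.le, hx.2⟩
  refine tendsto_nhds_unique hlim ((((hE.swap hn).tendsto_pdy (by omega) hx).const_mul
    ((x ^ α : ℝ) : ℂ)).congr' ?_)
  filter_upwards [eventually_nhdsGT_mem_interior_TriD hx] with y hy
  exact (hgE _ (swap_mem_interior_TriD.2 hy)).symm

theorem ErnstSolutionWith.tendsto_rpow_mul_pdx_extension (hn : 2 ≤ n)
    (hE : ErnstSolutionWith n α E E0 E1) (hg : ContinuousOn g TriD)
    (hgE : ∀ p ∈ interior TriD, g p = ((p.1 ^ α : ℝ) : ℂ) * pdx E p.1 p.2)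
    {y : ℝ} (hy : y ∈ Ico 0 1) :
    Tendsto (fun x => ((x ^ α : ℝ) : ℂ) * pdx E x y) (𝓝[>] 0) (𝓝 (g (0, y))) := by
  obtain ⟨-, -, -, -, -, -, hE0, -⟩ := id hE
  refine (hg.tendsto_nhdsGT_TriD hy).congr' ?_
  rcases hy.1.eq_or_lt with rfl | hy0
  · filter_upwards [Ioo_mem_nhdsGT one_pos] with x hx
    rw [hE.extension_apply_snd_zero hn hg hgE hx, pdx]
    congr 1
    refine Filter.EventuallyEq.deriv_eq ?_
    filter_upwards [Ioo_mem_nhds hx.1 hx.2] with t ht using (hE0 t ⟨ht.1.le, ht.2⟩).symm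
  · filter_upwards [eventually_nhdsGT_mem_interior_TriD ⟨hy0, hy.2⟩] with x hx using hgE _ hx

theorem ErnstSolutionWith.hasDerivAt_edge_trace (hn : 2 ≤ n) (hα : 0 < α)
    (hE : ErnstSolutionWith n α E E0 E1) (hg : ContinuousOn g TriD)
    (hgE : ∀ p ∈ interior TriD, g p = ((p.1 ^ α : ℝ) : ℂ) * pdx E p.1 p.2)
    {y : ℝ} (hy : y ∈ Ioo 0 1) :
    HasDerivAt (fun t => g (0, t)) (g (0, y) * (deriv E1 y / (E1 y).re + 1 / (2 * (1 - y)))) y := by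
  obtain ⟨hEc, hCn, hPDE, -, -, ⟨g3, hg3, hg3E⟩, -, hE1, hpos⟩ := id hE
  have hC2 : ContDiffOn ℝ 2 (fun p : ℝ × ℝ => E p.1 p.2) (interior TriD) :=
    hCn.of_le (by exact_mod_cast hn)
  have hg3E' : ∀ p ∈ interior TriD,
      ((p.2 ^ (-α) : ℝ) : ℂ) * g3 p = ((p.1 ^ α : ℝ) : ℂ) * pdxy E p.1 p.2 := fun p hp => by
    rw [hg3E p hp, ofReal_mul, mul_comm ((p.1 ^ α : ℝ) : ℂ), mul_assoc,
      ofReal_rpow_neg_mul_rpow_mul (mem_interior_TriD.1 hp).2.1]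
  have hder : HasDerivAt (fun t => g (0, t)) (((y ^ (-α) : ℝ) : ℂ) * g3 (0, y)) y := by
    refine hasDerivAt_edge_of_continuousOn_TriD hg (hg3.rpow_neg_snd_mul α) (fun p hp => ?_) hy
    rw [hg3E' p hp]
    refine ((hC2.hasDerivAt_pdx_right isOpen_interior hp).const_mul _).congr_of_eventuallyEq ?_
    filter_upwards [(continuous_const.prodMk continuous_id).continuousAt.preimage_mem_nhds
      (isOpen_interior.mem_nhds hp)] with t ht using hgE _ ht
  have hre : ((E1 y).re : ℂ) ≠ 0 := by
    rw [← hE1 y ⟨hy.1.le, hy.2⟩]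
    exact ofReal_ne_zero.2 (hpos (0, y) ⟨le_rfl, hy.1.le, by simpa using hy.2⟩).ne'
  have hr : Tendsto (fun x => (E x y).re) (𝓝[>] 0) (𝓝 (E1 y).re) := by
    rw [← hE1 y ⟨hy.1.le, hy.2⟩]
    exact (continuous_re.comp_continuousOn hEc).tendsto_nhdsGT_TriD ⟨hy.1.le, hy.2⟩
  have hlim := ernstEqAt_edge_limit hα hy.2
    ((eventually_nhdsGT_mem_interior_TriD hy).mono fun x hx => hPDE _ hx) hr
    (hE.tendsto_rpow_mul_pdx_extension hn hg hgE ⟨hy.1.le, hy.2⟩)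
    (hE.tendsto_pdy (by omega) hy)
    (((hg3.tendsto_nhdsGT_TriD ⟨hy.1.le, hy.2⟩).const_mul ((y ^ (-α) : ℝ) : ℂ)).congr'
      ((eventually_nhdsGT_mem_interior_TriD hy).mono fun x hx => hg3E' _ hx))
  have h1y : (1 - y : ℂ) ≠ 0 := by
    norm_cast; exact sub_ne_zero.2 hy.2.ne'
  convert hder using 1
  field_simp at hlim ⊢
  linear_combination -hlim

theorem ErnstSolutionWith.tendsto_rpow_mul_pdx (hn : 2 ≤ n) (hα : α ∈ Ioo 0 1)
    (hE : ErnstSolutionWith n α E E0 E1) (hd1 : ErnstData n α E1) {m : ℂ}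
    (hm : Tendsto (fun x : ℝ => ((x ^ α : ℝ) : ℂ) * deriv E0 x) (𝓝[>] 0) (𝓝 m))
    {y : ℝ} (hy : y ∈ Ico 0 1) :
    Tendsto (fun x : ℝ => ((x ^ α : ℝ) : ℂ) * pdx E x y) (𝓝[>] 0)
      (𝓝 (m * exp (I * ((∫ y' in (0 : ℝ)..y, (deriv E1 y').im / (E1 y').re : ℝ) : ℂ)) *
        ((E1 y).re : ℂ) / ((Real.sqrt (1 - y) : ℝ) : ℂ))) := by
  obtain ⟨-, -, -, ⟨g, hg, hgE⟩, -⟩ := id hE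
  obtain ⟨hE1c, hE1n, -, hE10, hE1pos⟩ := id hd1
  have hg0 : g (0, 0) = m := by
    refine tendsto_nhds_unique (hg.tendsto_nhdsGT_TriD ⟨le_rfl, one_pos⟩) (hm.congr' ?_)
    filter_upwards [Ioo_mem_nhdsGT one_pos] with x hx using
      (hE.extension_apply_snd_zero hn hg hgE hx).symm
  have hIcc : Icc 0 y ⊆ Ico 0 1 := Icc_subset_Ico_right hy.2
  have hIoo : Ioo 0 y ⊆ Ioo 0 1 := Ioo_subset_Ioo_right hy.2.le
  have hE1 : ContDiffOn ℝ 1 E1 (Ioo 0 1) := hE1n.of_le (by exact_mod_cast (by omega : 1 ≤ n))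
  have htrace := eq_of_hasDerivAt_eq_mul_deriv_div_re (h := fun t => g (0, t)) hy
    (hE1c.mono hIcc) (fun t ht => ((hE1.differentiableOn one_ne_zero).differentiableAt
      (Ioo_mem_nhds (hIoo ht).1 (hIoo ht).2)).hasDerivAt)
    ((hE1.continuousOn_deriv_of_isOpen isOpen_Ioo le_rfl).mono hIoo)
    (fun t ht => hE1pos t (hIcc ht)) hE10
    (hd1.intervalIntegrable_im_deriv_div_re hα.2 hy)
    (hg.comp (by fun_prop) fun t ht =>
      (⟨le_rfl, ht.1, by simpa using (hIcc ht).2⟩ : (0, t) ∈ TriD))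
    (fun t ht => hE.hasDerivAt_edge_trace hn hα.1 hg hgE (hIoo ht))
  rw [← hg0, ← htrace]
  exact hE.tendsto_rpow_mul_pdx_extension hn hg hgE hy

end ErnstSolution

theorem Filter.Tendsto.rpow_mul_norm {f : ℝ → ℂ} {m : ℂ} {α J R S : ℝ}
    (h : Tendsto (fun x : ℝ => ((x ^ α : ℝ) : ℂ) * f x) (𝓝[>] 0)
      (𝓝 (m * Complex.exp (I * (J : ℂ)) * (R : ℂ) / (S : ℂ))))
    (hR : 0 ≤ R) (hS : 0 ≤ S) :
    Tendsto (fun x : ℝ => x ^ α * ‖f x‖) (𝓝[>] 0) (𝓝 (‖m‖ * R / S)) := by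
  have hnorm := h.norm
  rw [norm_div, norm_mul, norm_mul, norm_exp_I_mul_ofReal, norm_real, norm_real,
    Real.norm_of_nonneg hR, Real.norm_of_nonneg hS, mul_one] at hnorm
  refine hnorm.congr' ?_
  filter_upwards [self_mem_nhdsWithin] with x hx
  rw [norm_mul, norm_real, Real.norm_of_nonneg (Real.rpow_nonneg (le_of_lt hx) _)]

/-- Boundary behavior of the C^n-solution of the Goursat problem for the
hyperbolic Ernst equation (Theorem 4 of the paper). -/
theorem ernst_goursat_boundary_behavior
    (n : ℕ) (hn : 2 ≤ n) (α : ℝ) (hα : α ∈ Ioo (0:ℝ) 1)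
    (E0 E1 : ℝ → ℂ) (hd0 : ErnstData n α E0) (hd1 : ErnstData n α E1)
    (m1 m2 : ℂ)
    (hm1 : Tendsto (fun x : ℝ => ((x ^ α : ℝ) : ℂ) * deriv E0 x) (𝓝[>] 0) (𝓝 m1))
    (hm2 : Tendsto (fun y : ℝ => ((y ^ α : ℝ) : ℂ) * deriv E1 y) (𝓝[>] 0) (𝓝 m2))
    (E : ℝ → ℝ → ℂ) (hE : ErnstSolutionWith n α E E0 E1) :
    (∀ y ∈ Ico (0:ℝ) 1,
      Tendsto (fun x : ℝ => ((x ^ α : ℝ) : ℂ) * pdx E x y) (𝓝[>] 0)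
        (𝓝 (m1 * Complex.exp (Complex.I *
              ((∫ y' in (0:ℝ)..y, (deriv E1 y').im / (E1 y').re : ℝ) : ℂ)) *
            ((E1 y).re : ℂ) / ((Real.sqrt (1 - y) : ℝ) : ℂ))) ∧
      Tendsto (fun x : ℝ => x ^ α * ‖pdx E x y‖) (𝓝[>] 0)
        (𝓝 (‖m1‖ * (E1 y).re / Real.sqrt (1 - y)))) ∧
    (∀ x ∈ Ico (0:ℝ) 1,
      Tendsto (fun y : ℝ => ((y ^ α : ℝ) : ℂ) * pdy E x y) (𝓝[>] 0)
        (𝓝 (m2 * Complex.exp (Complex.I *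
              ((∫ x' in (0:ℝ)..x, (deriv E0 x').im / (E0 x').re : ℝ) : ℂ)) *
            ((E0 x).re : ℂ) / ((Real.sqrt (1 - x) : ℝ) : ℂ))) ∧
      Tendsto (fun y : ℝ => y ^ α * ‖pdy E x y‖) (𝓝[>] 0)
        (𝓝 (‖m2‖ * (E0 x).re / Real.sqrt (1 - x)))) := by
  refine ⟨fun y hy => ?_, fun x hx => ?_⟩
  · have h := hE.tendsto_rpow_mul_pdx hn hα hd1 hm1 hy
    exact ⟨h, h.rpow_mul_norm (hd1.2.2.2.2 y hy).le (Real.sqrt_nonneg _)⟩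
  · have h := (hE.swap hn).tendsto_rpow_mul_pdx hn hα hd0 hm2 hx
    exact ⟨h, h.rpow_mul_norm (hd0.2.2.2.2 x hx).le (Real.sqrt_nonneg _)⟩
end
end

section
/- Let Ω ⊂ {(x,y) ∈ ℝ² : 0 < x, 0 < y, x + y < 1} be open and let V : Ω → ℝ be C². Then the following are equivalent: (i) V satisfies the Euler–Darboux equation on Ω; (ii) for every k ∈ ℂ ∖ [0,1], the compatibility condition ∂_y(λ(x,y,k) V_x(x,y)) = ∂_x(λ(x,y,k)^{-1} V_y(x,y)) of the linear Lax pair holds at every point of Ω. -/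
open Complex Set MeasureTheory Topology Filter ComplexConjugate

noncomputable section

/-! The radicand `(k - (1 - y)) / (k - x)` is a Möbius image of `k` that avoids `(-∞, 0]` whenever
`k ∉ [x, 1 - y]`, so `λ` is differentiable there, with `λ_x = λ / (2 (k - x))`,
`λ_y = λ / (2 (k - (1 - y)))` and `λ² (k - x) = k - (1 - y)`. Expanding the compatibility condition
with these formulas and the symmetry of the mixed partials of `V` gives
`∂_y(λ V_x) - ∂_x(λ⁻¹ V_y) = (V_x + V_y - 2 (1 - x - y) V_xy) / (2 λ (k - x))`,
whose vanishing is the Euler–Darboux equation; one value of `k` already suffices. -/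

lemma sub_ne_zero_of_notMem_image {s : Set ℝ} {k : ℂ} (hk : k ∉ ofReal '' s) {t : ℝ}
    (ht : t ∈ s) : k - t ≠ 0 :=
  fun h => hk ⟨t, ht, (sub_eq_zero.1 h).symm⟩

lemma sub_div_sub_mem_slitPlane {a b : ℝ} (hab : a ≤ b) {k : ℂ}
    (hk : k ∉ ofReal '' Icc a b) : (k - b) / (k - a) ∈ slitPlane := by
  have hka := sub_ne_zero_of_notMem_image hk (left_mem_Icc.2 hab)
  rw [mem_slitPlane_iff_not_le_zero]
  intro hw
  set s := ((k - b) / (k - a)).re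
  have hs : s ≤ 0 := hw.1
  have hws : (k - b) / (k - a) = s := Complex.ext rfl (by simpa using hw.2)
  have hs1 : 0 < 1 - s := by linarith
  refine hk ⟨(b - s * a) / (1 - s), ⟨?_, ?_⟩, ?_⟩
  · rw [le_div_iff₀ hs1]; nlinarith
  · rw [div_le_iff₀ hs1]; nlinarith
  · rw [div_eq_iff hka] at hws
    have hs1' : (1 - s : ℂ) ≠ 0 := by exact_mod_cast hs1.ne'
    push_cast
    rw [div_eq_iff hs1']
    linear_combination -hws

lemma HasDerivAt.cpow_one_half {f : ℝ → ℂ} {f' : ℂ} {t : ℝ} (hf : HasDerivAt f f' t)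
    (h0 : f t ∈ slitPlane) :
    HasDerivAt (fun s => f s ^ (1 / 2 : ℂ)) (f t ^ (1 / 2 : ℂ) * f' / (2 * f t)) t := by
  refine ((hasStrictDerivAt_cpow_const h0).hasDerivAt.comp t hf).congr_deriv ?_
  rw [cpow_sub _ _ (slitPlane_ne_zero h0), cpow_one]
  ring

section SpectralRoot

variable {x y : ℝ} {k : ℂ}

lemma lam_radicand_mem_slitPlane (hxy : x + y < 1) (hk : k ∉ ofReal '' Icc x (1 - y)) :
    (k - (1 - y)) / (k - x) ∈ slitPlane := by
  simpa using sub_div_sub_mem_slitPlane (by linarith) hk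

lemma lam_ne_zero (hxy : x + y < 1) (hk : k ∉ ofReal '' Icc x (1 - y)) : lam x y k ≠ 0 := by
  simp [lam, cpow_eq_zero_iff, slitPlane_ne_zero (lam_radicand_mem_slitPlane hxy hk)]

lemma lam_sq_mul (hxy : x + y < 1) (hk : k ∉ ofReal '' Icc x (1 - y)) :
    lam x y k ^ 2 * (k - x) = k - (1 - y) := by
  rw [lam, one_div, cpow_ofNat_inv_pow,
    div_mul_cancel₀ _ (sub_ne_zero_of_notMem_image hk (left_mem_Icc.2 (by linarith)))]

lemma hasDerivAt_lam_fst (hxy : x + y < 1) (hk : k ∉ ofReal '' Icc x (1 - y)) :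
    HasDerivAt (fun a => lam a y k) (lam x y k / (2 * (k - x))) x := by
  have hkx := sub_ne_zero_of_notMem_image hk (left_mem_Icc.2 (by linarith))
  have hky : k - (1 - y) ≠ 0 := by
    simpa using sub_ne_zero_of_notMem_image hk (right_mem_Icc.2 (by linarith))
  have hbase : HasDerivAt (fun a : ℝ => (k - (1 - y)) / (k - a)) ((k - (1 - y)) / (k - x) ^ 2) x :=
    ((hasDerivAt_const x _).div ((hasDerivAt_id x).ofReal_comp.const_sub k) hkx).congr_deriv
      (by simp)
  refine (hbase.cpow_one_half (lam_radicand_mem_slitPlane hxy hk)).congr_deriv ?_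
  field_simp
  rfl

lemma hasDerivAt_lam_snd (hxy : x + y < 1) (hk : k ∉ ofReal '' Icc x (1 - y)) :
    HasDerivAt (fun b => lam x b k) (lam x y k / (2 * (k - (1 - y)))) y := by
  have hbase : HasDerivAt (fun b : ℝ => (k - (1 - b)) / (k - x)) (1 / (k - x)) y :=
    ((((hasDerivAt_id y).ofReal_comp.const_sub 1).const_sub k).div_const _).congr_deriv (by simp)
  have hkx := sub_ne_zero_of_notMem_image hk (left_mem_Icc.2 (by linarith))
  refine (hbase.cpow_one_half (lam_radicand_mem_slitPlane hxy hk)).congr_deriv ?_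
  field_simp
  rfl

end SpectralRoot

section MixedPartials

variable {V : ℝ → ℝ → ℝ} {x y : ℝ}

lemma pdxR_eq_fderiv (h : DifferentiableAt ℝ (fun p : ℝ × ℝ => V p.1 p.2) (x, y)) :
    pdxR V x y = fderiv ℝ (fun p : ℝ × ℝ => V p.1 p.2) (x, y) (1, 0) := by
  exact (h.hasFDerivAt.comp_hasDerivAt x ((hasDerivAt_id x).prodMk (hasDerivAt_const x y))).deriv

lemma pdyR_eq_fderiv (h : DifferentiableAt ℝ (fun p : ℝ × ℝ => V p.1 p.2) (x, y)) :
    pdyR V x y = fderiv ℝ (fun p : ℝ × ℝ => V p.1 p.2) (x, y) (0, 1) := by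
  exact (h.hasFDerivAt.comp_hasDerivAt y ((hasDerivAt_const y x).prodMk (hasDerivAt_id y))).deriv

lemma eventually_differentiableAt_of_contDiffAt
    (hV : ContDiffAt ℝ 2 (fun p : ℝ × ℝ => V p.1 p.2) (x, y)) :
    ∀ᶠ p in 𝓝 (x, y), DifferentiableAt ℝ (fun p : ℝ × ℝ => V p.1 p.2) p :=
  (hV.eventually (by simp)).mono fun _ hp => hp.differentiableAt (by norm_num)

lemma hasDerivAt_pdyR_fst (hV : ContDiffAt ℝ 2 (fun p : ℝ × ℝ => V p.1 p.2) (x, y)) :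
    HasDerivAt (fun a => pdyR V a y)
      (fderiv ℝ (fderiv ℝ (fun p : ℝ × ℝ => V p.1 p.2)) (x, y) (1, 0) (0, 1)) x := by
  have hline : HasDerivAt (fun a : ℝ => (a, y)) (1, 0) x :=
    (hasDerivAt_id x).prodMk (hasDerivAt_const x y)
  have hG : ContDiffAt ℝ 1 (fderiv ℝ (fun p : ℝ × ℝ => V p.1 p.2)) (x, y) :=
    hV.fderiv_right (by norm_num)
  have hcurve : HasDerivAt
      (fun a : ℝ => fderiv ℝ (fun p : ℝ × ℝ => V p.1 p.2) (a, y) ((0 : ℝ), (1 : ℝ)))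
      (fderiv ℝ (fderiv ℝ (fun p : ℝ × ℝ => V p.1 p.2)) (x, y) (1, 0) (0, 1)) x := by
    have hGline := (hG.differentiableAt (by norm_num)).hasFDerivAt.comp_hasDerivAt x hline
    exact (hGline.clm_apply (hasDerivAt_const x ((0 : ℝ), (1 : ℝ)))).congr_deriv (by simp)
  refine hcurve.congr_of_eventuallyEq ?_
  filter_upwards [hline.continuousAt.eventually (eventually_differentiableAt_of_contDiffAt hV)]
    with a ha using pdyR_eq_fderiv ha

lemma hasDerivAt_pdxR_snd (hV : ContDiffAt ℝ 2 (fun p : ℝ × ℝ => V p.1 p.2) (x, y)) :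
    HasDerivAt (fun b => pdxR V x b)
      (fderiv ℝ (fderiv ℝ (fun p : ℝ × ℝ => V p.1 p.2)) (x, y) (0, 1) (1, 0)) y := by
  have hline : HasDerivAt (fun b : ℝ => (x, b)) (0, 1) y :=
    (hasDerivAt_const y x).prodMk (hasDerivAt_id y)
  have hG : ContDiffAt ℝ 1 (fderiv ℝ (fun p : ℝ × ℝ => V p.1 p.2)) (x, y) :=
    hV.fderiv_right (by norm_num)
  have hcurve : HasDerivAt
      (fun b : ℝ => fderiv ℝ (fun p : ℝ × ℝ => V p.1 p.2) (x, b) ((1 : ℝ), (0 : ℝ)))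
      (fderiv ℝ (fderiv ℝ (fun p : ℝ × ℝ => V p.1 p.2)) (x, y) (0, 1) (1, 0)) y := by
    have hGline := (hG.differentiableAt (by norm_num)).hasFDerivAt.comp_hasDerivAt y hline
    exact (hGline.clm_apply (hasDerivAt_const y ((1 : ℝ), (0 : ℝ)))).congr_deriv (by simp)
  refine hcurve.congr_of_eventuallyEq ?_
  filter_upwards [hline.continuousAt.eventually (eventually_differentiableAt_of_contDiffAt hV)]
    with b hb using pdxR_eq_fderiv hb

lemma ContDiffAt.hasDerivAt_pdyR (hV : ContDiffAt ℝ 2 (fun p : ℝ × ℝ => V p.1 p.2) (x, y)) :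
    HasDerivAt (fun a => pdyR V a y) (pdxyR V x y) x := by
  rw [pdxyR, pdxR, (hasDerivAt_pdyR_fst hV).deriv]
  exact hasDerivAt_pdyR_fst hV

lemma ContDiffAt.hasDerivAt_pdxR (hV : ContDiffAt ℝ 2 (fun p : ℝ × ℝ => V p.1 p.2) (x, y)) :
    HasDerivAt (fun b => pdxR V x b) (pdxyR V x y) y := by
  rw [pdxyR, pdxR, (hasDerivAt_pdyR_fst hV).deriv, ← hV.isSymmSndFDerivAt (by simp)]
  exact hasDerivAt_pdxR_snd hV

end MixedPartials

lemma eulerDarbouxAt_iff {V : ℝ → ℝ → ℝ} {x y : ℝ} (hxy : x + y < 1) :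
    EulerDarbouxAt V x y ↔ pdxR V x y + pdyR V x y - 2 * (1 - x - y) * pdxyR V x y = 0 := by
  have h : 2 * (1 - x - y) ≠ 0 := by linarith
  rw [EulerDarbouxAt, sub_eq_zero, eq_div_iff h, sub_eq_zero, eq_comm, mul_comm]

theorem lax_compatibility_iff_eulerDarbouxAt {V : ℝ → ℝ → ℝ} {x y : ℝ} {k : ℂ}
    (hV : ContDiffAt ℝ 2 (fun p : ℝ × ℝ => V p.1 p.2) (x, y)) (hxy : x + y < 1)
    (hk : k ∉ ofReal '' Icc x (1 - y)) :
    pdy (fun a b => lam a b k * (pdxR V a b : ℂ)) x y =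
      pdx (fun a b => (lam a b k)⁻¹ * (pdyR V a b : ℂ)) x y ↔ EulerDarbouxAt V x y := by
  have hL := lam_ne_zero hxy hk
  have hkx := sub_ne_zero_of_notMem_image hk (left_mem_Icc.2 (by linarith))
  have hlhs : pdy (fun a b => lam a b k * (pdxR V a b : ℂ)) x y =
      lam x y k / (2 * (k - (1 - y))) * pdxR V x y + lam x y k * pdxyR V x y :=
    ((hasDerivAt_lam_snd hxy hk).mul hV.hasDerivAt_pdxR.ofReal_comp).deriv
  have hrhs : pdx (fun a b => (lam a b k)⁻¹ * (pdyR V a b : ℂ)) x y =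
      -(lam x y k / (2 * (k - x))) / lam x y k ^ 2 * pdyR V x y +
        (lam x y k)⁻¹ * pdxyR V x y :=
    (((hasDerivAt_lam_fst hxy hk).fun_inv hL).mul hV.hasDerivAt_pdyR.ofReal_comp).deriv
  have hdefect : pdy (fun a b => lam a b k * (pdxR V a b : ℂ)) x y -
      pdx (fun a b => (lam a b k)⁻¹ * (pdyR V a b : ℂ)) x y =
      ((pdxR V x y + pdyR V x y - 2 * (1 - x - y) * pdxyR V x y : ℝ) : ℂ) /
        (2 * (k - x) * lam x y k) := by
    rw [hlhs, hrhs]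
    push_cast
    rw [show (1 - x - y : ℂ) = (k - x) - (k - (1 - y)) by ring, ← lam_sq_mul hxy hk]
    field_simp
    ring
  rw [← sub_eq_zero, hdefect, div_eq_zero_iff, ofReal_eq_zero, eulerDarbouxAt_iff hxy]
  simp [hkx, hL]

/-- The Euler–Darboux equation is equivalent to the compatibility condition
∂_y(λ V_x) = ∂_x(λ⁻¹ V_y) of its linear Lax pair, for every spectral parameter
k ∈ ℂ ∖ [0,1]. -/
theorem eulerDarboux_iff_lax_compatibility
    (Ω : Set (ℝ × ℝ)) (hΩ : IsOpen Ω)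
    (hsub : Ω ⊆ {p : ℝ × ℝ | 0 < p.1 ∧ 0 < p.2 ∧ p.1 + p.2 < 1})
    (V : ℝ → ℝ → ℝ)
    (hV : ContDiffOn ℝ 2 (fun p : ℝ × ℝ => V p.1 p.2) Ω) :
    (∀ p ∈ Ω, EulerDarbouxAt V p.1 p.2) ↔
    (∀ k ∉ seg01, ∀ p ∈ Ω,
      pdy (fun a b => lam a b k * (pdxR V a b : ℂ)) p.1 p.2 =
      pdx (fun a b => (lam a b k)⁻¹ * (pdyR V a b : ℂ)) p.1 p.2) := by
  have hpoint : ∀ k ∉ seg01, ∀ p ∈ Ω,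
      (pdy (fun a b => lam a b k * (pdxR V a b : ℂ)) p.1 p.2 =
        pdx (fun a b => (lam a b k)⁻¹ * (pdyR V a b : ℂ)) p.1 p.2) ↔
      EulerDarbouxAt V p.1 p.2 := by
    intro k hk p hp
    obtain ⟨hx, hy, hxy⟩ := hsub hp
    refine lax_compatibility_iff_eulerDarbouxAt (hV.contDiffAt (hΩ.mem_nhds hp)) hxy fun h => hk ?_
    exact image_mono (Icc_subset_Icc hx.le (by linarith)) h
  have htwo : (2 : ℂ) ∉ seg01 := by
    rintro ⟨t, ht, htwo⟩
    have : t = 2 := ofReal_inj.1 htwo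
    linarith [ht.2]
  exact ⟨fun hED k hk p hp => (hpoint k hk p hp).2 (hED p hp),
    fun hlax p hp => (hpoint 2 htwo p hp).1 (hlax 2 htwo p hp)⟩
end
end

section
/- Let n ≥ 2 be an integer and α ∈ [0,1), and let ℰ0 : [0,1) → ℂ satisfy: ℰ0 ∈ C([0,1)) ∩ C^n((0,1)); x^α ℰ0'(x) extends continuously to [0,1); ℰ0(0) = 1; Re ℰ0 > 0 on [0,1). Then the unique continuous function Ψ : [0,1) → ℂ^{2×2} satisfying Ψ(x) = I + ∫_0^x (1/(2 Re ℰ0(x'))) [[conj(ℰ0'(x')), conj(ℰ0'(x'))],[ℰ0'(x'), ℰ0'(x')]] Ψ(x') dx' is given by Ψ(x) = (1/2) [[conj(ℰ0(x)), 1],[ℰ0(x), −1]] · [[1, 1],[1, −1]] for all x ∈ [0,1). -/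
/-!
The columns of `U0inf` coincide, so `(U0inf * M) i j` only sees the column sums of `M`, and every
column of `PsiInf` sums to `Re ℰ0`. Hence `(U0inf * PsiInf) i j` is `ℰ0' / 2` or its conjugate,
which integrates to `PsiInf - I`. For uniqueness, the column sums `s` of the difference of two
solutions satisfy `s = ∫ ((Re ℰ0)' / Re ℰ0) s`, so `s / Re ℰ0` is constant, equal to its value `0`
at `x = 0`; then the difference is `∫ U0inf * 0 = 0`. All integrals converge at `0` because
`x ^ α ℰ0'` is continuous with `α < 1`.
-/

open Complex Set MeasureTheory Topology Filter ComplexConjugate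

noncomputable section

/-- The explicit matrix (1/2)[[conj ℰ0(x), 1],[ℰ0(x), −1]]·[[1,1],[1,−1]]. -/
def PsiInf (E0 : ℝ → ℂ) (x : ℝ) : Matrix (Fin 2) (Fin 2) ℂ :=
  (1/2 : ℂ) • (!![conj (E0 x), 1; E0 x, -1] * !![1, 1; 1, -1])

/-- The coefficient matrix of the x-part of the Lax pair with λ ≡ 1. -/
def U0inf (E0 : ℝ → ℂ) (x : ℝ) : Matrix (Fin 2) (Fin 2) ℂ :=
  (1 / (2 * ((E0 x).re : ℂ))) •
    !![conj (deriv E0 x), conj (deriv E0 x); deriv E0 x, deriv E0 x]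

theorem uIcc_subset_Ico_of_mem {a b x : ℝ} (hx : x ∈ Ico a b) : uIcc a x ⊆ Ico a b := by
  rw [uIcc_of_le hx.1]
  exact Icc_subset_Ico_right hx.2

section Calculus

variable {E : Type*} [NormedAddCommGroup E] [NormedSpace ℝ E] [CompleteSpace E]

theorem eq_of_hasDerivAt_eq_zero_Ico {f : ℝ → E} {a b : ℝ} (hf : ContinuousOn f (Ico a b))
    (hf' : ∀ x ∈ Ioo a b, HasDerivAt f 0 x) : ∀ x ∈ Ico a b, f x = f a := by
  intro x hx
  have h := intervalIntegral.integral_eq_sub_of_hasDerivAt_of_le hx.1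
    (hf.mono (Icc_subset_Ico_right hx.2)) (fun t ht => hf' t ⟨ht.1, ht.2.trans hx.2⟩)
    intervalIntegrable_const
  rwa [intervalIntegral.integral_zero, eq_comm, sub_eq_zero] at h

theorem hasDerivAt_of_eq_integral {F h : ℝ → E} {a b : ℝ} (hh : ContinuousOn h (Ioo a b))
    (hint : ∀ x ∈ Ioo a b, IntervalIntegrable h volume a x)
    (hF : ∀ x ∈ Ioo a b, F x = ∫ t in a..x, h t) {x : ℝ} (hx : x ∈ Ioo a b) :
    HasDerivAt F (h x) x :=
  (intervalIntegral.integral_hasDerivAt_right (hint x hx)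
      (hh.stronglyMeasurableAtFilter isOpen_Ioo x hx)
      (hh.continuousAt (isOpen_Ioo.mem_nhds hx))).congr_of_eventuallyEq
    (eventually_of_mem (isOpen_Ioo.mem_nhds hx) hF)

end Calculus

/-- `(s / r)' = 0`, and the equation forces `s a = 0`. -/
theorem eq_zero_of_eq_integral_mul_of_hasDerivAt {a b : ℝ} {r k s : ℝ → ℂ}
    (hr : ContinuousOn r (Ico a b)) (hr0 : ∀ x ∈ Ico a b, r x ≠ 0)
    (hr' : ∀ x ∈ Ioo a b, HasDerivAt r (k x * r x) x) (hk : ContinuousOn k (Ioo a b))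
    (hs : ContinuousOn s (Ico a b))
    (hint : ∀ x ∈ Ico a b, IntervalIntegrable (fun t => k t * s t) volume a x)
    (heq : ∀ x ∈ Ico a b, s x = ∫ t in a..x, k t * s t) :
    ∀ x ∈ Ico a b, s x = 0 := by
  intro x hx
  have hs' : ∀ y ∈ Ioo a b, HasDerivAt s (k y * s y) y := fun y hy =>
    hasDerivAt_of_eq_integral (hk.mul (hs.mono Ioo_subset_Ico_self))
      (fun z hz => hint z (Ioo_subset_Ico_self hz)) (fun z hz => heq z (Ioo_subset_Ico_self hz)) hy
  have hquot : ∀ y ∈ Ioo a b, HasDerivAt (fun t => s t / r t) 0 y := fun y hy =>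
    ((hs' y hy).div (hr' y hy) (hr0 y (Ioo_subset_Ico_self hy))).congr_deriv (by ring)
  have ha : a ∈ Ico a b := ⟨le_rfl, hx.1.trans_lt hx.2⟩
  have hsa : s a = 0 := by rw [heq a ha, intervalIntegral.integral_same]
  have hconst := eq_of_hasDerivAt_eq_zero_Ico (hs.div hr hr0) hquot x hx
  simpa [hsa, hr0 x hx] using hconst

theorem intervalIntegrable_of_rpow_mul_eq {α x : ℝ} (hα : α < 1) (hx : 0 ≤ x) {f g : ℝ → ℂ}
    (hg : ContinuousOn g (Icc 0 x)) (hfg : ∀ t ∈ Ioc 0 x, g t = ((t ^ α : ℝ) : ℂ) * f t) :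
    IntervalIntegrable f volume 0 x := by
  have hpow := intervalIntegral.intervalIntegrable_rpow' (a := 0) (b := x) (r := -α) (by linarith)
  have hpowC : IntervalIntegrable (fun t : ℝ => ((t ^ (-α) : ℝ) : ℂ)) volume 0 x :=
    ⟨hpow.1.ofReal, hpow.2.ofReal⟩
  refine (hpowC.mul_continuousOn (by rwa [uIcc_of_le hx])).congr fun t ht => ?_
  rw [uIoc_of_le hx] at ht
  rw [hfg t ht, ← mul_assoc, ← ofReal_mul, ← Real.rpow_add ht.1, neg_add_cancel, Real.rpow_zero,
    ofReal_one, one_mul]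

/-- Row `0` of `U0inf` and of `PsiInf` is the conjugate of row `1`; `rowConj i` is the map applied
on row `i`. -/
def rowConj (i : Fin 2) : ℂ →L[ℝ] ℂ :=
  ![conjCLE.toContinuousLinearMap, ContinuousLinearMap.id ℝ ℂ] i

@[simp]
theorem rowConj_zero (z : ℂ) : rowConj 0 z = conj z := rfl

@[simp]
theorem rowConj_one (z : ℂ) : rowConj 1 z = z := rfl

section Matrices

variable (E0 : ℝ → ℂ) (t : ℝ)

theorem U0inf_apply (i j : Fin 2) :
    U0inf E0 t i j = rowConj i (deriv E0 t) / (2 * (E0 t).re) := by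
  fin_cases i <;> fin_cases j <;> simp [U0inf, div_eq_inv_mul]

theorem PsiInf_apply (i j : Fin 2) :
    PsiInf E0 t i j = (rowConj i (E0 t) + if i = j then 1 else -1) / 2 := by
  fin_cases i <;> fin_cases j <;> simp [PsiInf] <;> ring

theorem U0inf_mul_apply (M : Matrix (Fin 2) (Fin 2) ℂ) (i j : Fin 2) :
    (U0inf E0 t * M) i j = U0inf E0 t i 0 * (M 0 j + M 1 j) := by
  simp [Matrix.mul_apply, Fin.sum_univ_two, U0inf_apply, mul_add]

theorem PsiInf_zero_add_PsiInf_one (j : Fin 2) :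
    PsiInf E0 t 0 j + PsiInf E0 t 1 j = (E0 t).re := by
  have h := add_conj (E0 t)
  push_cast at h
  fin_cases j <;> simp [PsiInf_apply] <;> linear_combination h / 2

theorem PsiInf_of_eq_one (h : E0 t = 1) : PsiInf E0 t = 1 := by
  ext i j
  fin_cases i <;> fin_cases j <;> simp [PsiInf_apply, h]

theorem U0inf_zero_add_U0inf_one_mul_re (h : ((E0 t).re : ℂ) ≠ 0) :
    (U0inf E0 t 0 0 + U0inf E0 t 1 0) * (E0 t).re = (deriv E0 t).re := by
  have h2 := add_conj (deriv E0 t)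
  push_cast at h2
  simp only [U0inf_apply, rowConj_zero, rowConj_one]
  field_simp
  linear_combination h2

end Matrices

namespace ErnstData

variable {n : ℕ} {α : ℝ} {E0 : ℝ → ℂ}

theorem re_ne_zero (hE : ErnstData n α E0) {t : ℝ} (ht : t ∈ Ico 0 1) : ((E0 t).re : ℂ) ≠ 0 :=
  ofReal_ne_zero.2 (hE.2.2.2.2 t ht).ne'

theorem continuousOn_re (hE : ErnstData n α E0) :
    ContinuousOn (fun t => ((E0 t).re : ℂ)) (Ico 0 1) :=
  continuous_ofReal.comp_continuousOn (continuous_re.comp_continuousOn hE.1)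

theorem hasDerivAt (hE : ErnstData n α E0) (hn : 1 ≤ n) {t : ℝ} (ht : t ∈ Ioo 0 1) :
    HasDerivAt E0 (deriv E0 t) t :=
  ((hE.2.1.contDiffAt (isOpen_Ioo.mem_nhds ht)).differentiableAt
    (by exact_mod_cast Nat.one_le_iff_ne_zero.1 hn)).hasDerivAt

theorem hasDerivAt_re (hE : ErnstData n α E0) (hn : 1 ≤ n) {t : ℝ} (ht : t ∈ Ioo 0 1) :
    HasDerivAt (fun t => ((E0 t).re : ℂ)) ((deriv E0 t).re : ℂ) t :=
  (reCLM.hasFDerivAt.comp_hasDerivAt t (hE.hasDerivAt hn ht)).ofReal_comp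

theorem continuousOn_U0inf_apply (hE : ErnstData n α E0) (hn : 1 ≤ n) (i j : Fin 2) :
    ContinuousOn (fun t => U0inf E0 t i j) (Ioo 0 1) := by
  simp_rw [U0inf_apply]
  exact ((rowConj i).continuous.comp_continuousOn
    (hE.2.1.continuousOn_deriv_of_isOpen isOpen_Ioo (by exact_mod_cast hn))).div
    (continuousOn_const.mul (hE.continuousOn_re.mono Ioo_subset_Ico_self))
    fun t ht => mul_ne_zero two_ne_zero (hE.re_ne_zero (Ioo_subset_Ico_self ht))

theorem continuousOn_PsiInf (hE : ErnstData n α E0) : ContinuousOn (PsiInf E0) (Ico 0 1) := by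
  refine continuousOn_pi.2 fun i => continuousOn_pi.2 fun j => ?_
  simp_rw [PsiInf_apply]
  exact (((rowConj i).continuous.comp_continuousOn hE.1).add continuousOn_const).div_const 2

theorem intervalIntegrable_deriv (hE : ErnstData n α E0) (hα : α < 1) {x : ℝ} (hx : x ∈ Ico 0 1) :
    IntervalIntegrable (deriv E0) volume 0 x :=
  let ⟨_, hg, hgE⟩ := hE.2.2.1
  intervalIntegrable_of_rpow_mul_eq hα hx.1 (hg.mono (Icc_subset_Ico_right hx.2))
    fun t ht => hgE t ⟨ht.1, ht.2.trans_lt hx.2⟩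

theorem integral_deriv (hE : ErnstData n α E0) (hn : 1 ≤ n) (hα : α < 1) {x : ℝ}
    (hx : x ∈ Ico 0 1) : ∫ t in 0..x, deriv E0 t = E0 x - E0 0 :=
  intervalIntegral.integral_eq_sub_of_hasDerivAt_of_le hx.1 (hE.1.mono (Icc_subset_Ico_right hx.2))
    (fun _ ht => hE.hasDerivAt hn ⟨ht.1, ht.2.trans hx.2⟩) (hE.intervalIntegrable_deriv hα hx)

theorem intervalIntegrable_U0inf_mul (hE : ErnstData n α E0) (hα : α < 1)
    {M : ℝ → Matrix (Fin 2) (Fin 2) ℂ} (hM : ContinuousOn M (Ico 0 1)) {x : ℝ} (hx : x ∈ Ico 0 1)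
    (i j : Fin 2) : IntervalIntegrable (fun t => (U0inf E0 t * M t) i j) volume 0 x := by
  have hD := hE.intervalIntegrable_deriv hα hx
  have hDi : IntervalIntegrable (fun t => rowConj i (deriv E0 t)) volume 0 x :=
    ⟨(rowConj i).integrable_comp hD.1, (rowConj i).integrable_comp hD.2⟩
  have hMe : ∀ l, ContinuousOn (fun t => M t l j) (Ico 0 1) := fun l =>
    (continuous_id.matrix_elem l j).comp_continuousOn hM
  have hc : ContinuousOn (fun t => (M t 0 j + M t 1 j) / (2 * (E0 t).re)) (uIcc 0 x) :=
    (((hMe 0).add (hMe 1)).div (continuousOn_const.mul hE.continuousOn_re)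
      fun t ht => mul_ne_zero two_ne_zero (hE.re_ne_zero ht)).mono (uIcc_subset_Ico_of_mem hx)
  refine (hDi.mul_continuousOn hc).congr fun _ _ => ?_
  simp only [U0inf_mul_apply, U0inf_apply]
  ring

theorem PsiInf_eq_one_add_integral (hE : ErnstData n α E0) (hn : 1 ≤ n) (hα : α < 1) :
    ∀ x ∈ Ico (0:ℝ) 1, ∀ i j, PsiInf E0 x i j = (1 : Matrix (Fin 2) (Fin 2) ℂ) i j +
      ∫ t in 0..x, (U0inf E0 t * PsiInf E0 t) i j := by
  intro x hx i j
  have hcongr : EqOn (fun t => (U0inf E0 t * PsiInf E0 t) i j)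
      (fun t => rowConj i (deriv E0 t) / 2) (uIcc 0 x) := fun t ht => by
    have := hE.re_ne_zero (uIcc_subset_Ico_of_mem hx ht)
    simp only [U0inf_mul_apply, PsiInf_zero_add_PsiInf_one, U0inf_apply]
    field_simp
  rw [intervalIntegral.integral_congr hcongr, intervalIntegral.integral_div,
    (rowConj i).intervalIntegral_comp_comm (hE.intervalIntegrable_deriv hα hx),
    hE.integral_deriv hn hα hx, ← PsiInf_of_eq_one E0 0 hE.2.2.2.1, PsiInf_apply, PsiInf_apply,
    map_sub]
  ring

theorem eq_zero_of_eq_integral (hE : ErnstData n α E0) (hn : 1 ≤ n) (hα : α < 1)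
    {Φ : ℝ → Matrix (Fin 2) (Fin 2) ℂ} (hΦc : ContinuousOn Φ (Ico 0 1))
    (hΦ : ∀ x ∈ Ico (0:ℝ) 1, ∀ i j, Φ x i j = ∫ t in 0..x, (U0inf E0 t * Φ t) i j) :
    ∀ x ∈ Ico (0:ℝ) 1, Φ x = 0 := by
  have hcol : ∀ j, ∀ x ∈ Ico (0:ℝ) 1, Φ x 0 j + Φ x 1 j = 0 := by
    intro j
    have hrow : ∀ i, ∀ x ∈ Ico (0:ℝ) 1,
        IntervalIntegrable (fun t => (U0inf E0 t * Φ t) i j) volume 0 x := fun i x hx =>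
      hE.intervalIntegrable_U0inf_mul hα hΦc hx i j
    have hsum : (fun t => (U0inf E0 t 0 0 + U0inf E0 t 1 0) * (Φ t 0 j + Φ t 1 j)) =
        fun t => (U0inf E0 t * Φ t) 0 j + (U0inf E0 t * Φ t) 1 j := by
      ext t
      simp only [U0inf_mul_apply]
      ring
    refine eq_zero_of_eq_integral_mul_of_hasDerivAt (k := fun t => U0inf E0 t 0 0 + U0inf E0 t 1 0)
      (s := fun t => Φ t 0 j + Φ t 1 j) hE.continuousOn_re (fun _ => hE.re_ne_zero) (fun t ht => ?_)
      ((hE.continuousOn_U0inf_apply hn 0 0).add (hE.continuousOn_U0inf_apply hn 1 0))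
      (((continuous_id.matrix_elem 0 j).comp_continuousOn hΦc).add
        ((continuous_id.matrix_elem 1 j).comp_continuousOn hΦc))
      (fun x hx => hsum ▸ (hrow 0 x hx).add (hrow 1 x hx)) (fun x hx => ?_)
    · rw [U0inf_zero_add_U0inf_one_mul_re E0 t (hE.re_ne_zero (Ioo_subset_Ico_self ht))]
      exact hE.hasDerivAt_re hn ht
    · rw [hsum, intervalIntegral.integral_add (hrow 0 x hx) (hrow 1 x hx), ← hΦ x hx, ← hΦ x hx]
  intro x hx
  ext i j
  rw [hΦ x hx i j, Matrix.zero_apply]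
  refine (intervalIntegral.integral_congr fun t ht => ?_).trans intervalIntegral.integral_zero
  simp only [U0inf_mul_apply, hcol j t (uIcc_subset_Ico_of_mem hx ht), mul_zero]

end ErnstData

/-- The unique continuous solution of the Volterra equation obtained from
the x-part of the Lax pair with λ ≡ 1 is Ψ(x) = (1/2)[[conj ℰ0, 1],[ℰ0, −1]]·[[1,1],[1,−1]]. -/
theorem volterra_xpart_at_infinity
    (n : ℕ) (hn : 2 ≤ n) (α : ℝ) (hα : α ∈ Ico (0:ℝ) 1)
    (E0 : ℝ → ℂ) (hd0 : ErnstData n α E0) :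
    (ContinuousOn (fun x : ℝ => PsiInf E0 x) (Ico 0 1) ∧
      ∀ x ∈ Ico (0:ℝ) 1, ∀ i j,
        PsiInf E0 x i j =
          (1 : Matrix (Fin 2) (Fin 2) ℂ) i j +
            ∫ t in (0:ℝ)..x, (U0inf E0 t * PsiInf E0 t) i j) ∧
    (∀ Ψ : ℝ → Matrix (Fin 2) (Fin 2) ℂ, ContinuousOn Ψ (Ico 0 1) →
      (∀ x ∈ Ico (0:ℝ) 1, ∀ i j, Ψ x i j =
        (1 : Matrix (Fin 2) (Fin 2) ℂ) i j +
          ∫ t in (0:ℝ)..x, (U0inf E0 t * Ψ t) i j) →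
      ∀ x ∈ Ico (0:ℝ) 1, Ψ x = PsiInf E0 x) := by
  have hn1 : 1 ≤ n := by omega
  have hPsi := hd0.PsiInf_eq_one_add_integral hn1 hα.2
  refine ⟨⟨hd0.continuousOn_PsiInf, hPsi⟩, fun Ψ hΨc hΨ x hx => ?_⟩
  have hΦc := hΨc.sub hd0.continuousOn_PsiInf
  refine sub_eq_zero.1 (hd0.eq_zero_of_eq_integral hn1 hα.2 hΦc (fun y hy i j => ?_) x hx)
  rw [Pi.sub_apply, Matrix.sub_apply, hΨ y hy, hPsi y hy, add_sub_add_left_eq_sub,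
    ← intervalIntegral.integral_sub (hd0.intervalIntegrable_U0inf_mul hα.2 hΨc hy i j)
      (hd0.intervalIntegrable_U0inf_mul hα.2 hd0.continuousOn_PsiInf hy i j)]
  simp only [Pi.sub_apply, Matrix.mul_sub, Matrix.sub_apply]
end
end

section
/- Let n ≥ 2 be an integer and α ∈ [0,1), and let ℰ0 : [0,1) → ℂ satisfy: ℰ0 ∈ C([0,1)) ∩ C^n((0,1)); x^α ℰ0'(x) extends continuously to [0,1); ℰ0(0) = 1; Re ℰ0 > 0 on [0,1). For each k ∈ ℂ ∖ [0,1], let Φ0(·,k) be the unique continuous solution of the Volterra equation Φ0(x,k) = I + ∫_0^x U0(x',k) Φ0(x',k) dx', where U0(x,k) = (1/(2 Re ℰ0(x))) [[conj(ℰ0'(x)), λ(x,0,k) conj(ℰ0'(x))],[λ(x,0,k) ℰ0'(x), ℰ0'(x)]]. Then det Φ0(x,k) = Re ℰ0(x) for all x ∈ [0,1) and all k ∈ ℂ ∖ [0,1]. -/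
open Complex Set MeasureTheory Topology Filter ComplexConjugate

noncomputable section

/-!
Differentiating the Volterra equation gives `Φ0' = U0 Φ0` on `(0,1)`; the integrand is integrable
near `0` because `x^α U0(x)` stays bounded there. For a `2 × 2` matrix solution of a linear ODE,
`(det Φ0)' = tr U0 · det Φ0`, and the diagonal `(conj ℰ0', ℰ0') / (2 Re ℰ0)` of `U0` has trace
`Re ℰ0' / Re ℰ0`. Hence `det Φ0 / Re ℰ0` has zero derivative on `(0,1)`; being continuous on
`[0,1)` and equal to `1` at `0`, it is identically `1`.
-/

lemma ContinuousOn.eq_left_of_hasDerivAt_zero {E : Type*} [NormedAddCommGroup E] [NormedSpace ℝ E]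
    {f : ℝ → E} {a b : ℝ} (hf : ContinuousOn f (Ico a b)) (hf' : ∀ x ∈ Ioo a b, HasDerivAt f 0 x) :
    ∀ x ∈ Ico a b, f x = f a := by
  intro x hx
  have hab : a < b := hx.1.trans_lt hx.2
  obtain ⟨c, hc⟩ := isOpen_Ioo.exists_is_const_of_deriv_eq_zero isPreconnected_Ioo
    (fun t ht => (hf' t ht).differentiableAt.differentiableWithinAt) (fun t ht => (hf' t ht).deriv)
  have hconst : EqOn f (fun _ => c) (Ico a b) :=
    EqOn.of_subset_closure hc hf continuousOn_const Ioo_subset_Ico_self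
      (by rw [closure_Ioo hab.ne]; exact Ico_subset_Icc_self)
  rw [hconst hx, hconst (left_mem_Ico.2 hab)]

lemma hasDerivAt_of_eq_add_integral {E : Type*} [NormedAddCommGroup E] [NormedSpace ℝ E]
    [CompleteSpace E] {f F : ℝ → E} {c : E} {a b x : ℝ} (hF : ContinuousOn F (Ioo a b))
    (hint : IntervalIntegrable F volume a x)
    (heq : ∀ t ∈ Ioo a b, f t = c + ∫ s in a..t, F s) (hx : x ∈ Ioo a b) :
    HasDerivAt f (F x) x := by
  have hnhds : Ioo a b ∈ 𝓝 x := isOpen_Ioo.mem_nhds hx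
  refine ((intervalIntegral.integral_hasDerivAt_right hint
    (hF.stronglyMeasurableAtFilter isOpen_Ioo x hx) (hF.continuousAt hnhds)).const_add c)
    |>.congr_of_eventuallyEq ?_
  filter_upwards [hnhds] with t ht using heq t ht

lemma intervalIntegrable_of_rpow_smul {E : Type*} [NormedAddCommGroup E] [NormedSpace ℝ E]
    {f g : ℝ → E} {α x : ℝ} (hα : α < 1) (hx : 0 ≤ x) (hg : ContinuousOn g (Icc 0 x))
    (hfg : ∀ t ∈ Ioc 0 x, g t = t ^ α • f t) : IntervalIntegrable f volume 0 x := by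
  have hint : IntervalIntegrable (fun t => t ^ (-α) • g t) volume 0 x :=
    (intervalIntegral.intervalIntegrable_rpow' (by linarith)).smul_continuousOn
      (by rwa [uIcc_of_le hx])
  refine hint.congr fun t ht => ?_
  rw [uIoc_of_le hx] at ht
  rw [hfg t ht, smul_smul, ← Real.rpow_add ht.1, neg_add_cancel, Real.rpow_zero, one_smul]

lemma sub_ofReal_ne_zero_of_notMem_seg01 {k : ℂ} (hk : k ∉ seg01) {x : ℝ} (hx : x ∈ Icc 0 1) :
    k - x ≠ 0 :=
  fun h => hk ⟨x, hx, (sub_eq_zero.1 h).symm⟩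

lemma div_mem_slitPlane_of_notMem_seg01 {k : ℂ} (hk : k ∉ seg01) {x : ℝ} (hx : x ∈ Icc 0 1) :
    (k - 1) / (k - x) ∈ slitPlane := by
  have hkx := sub_ofReal_ne_zero_of_notMem_seg01 hk hx
  -- `(k - 1) / (k - x) = s ≤ 0` would force `k = (1 - s x) / (1 - s) ∈ [x, 1]`.
  rw [mem_slitPlane_iff_not_le_zero]
  intro hle
  set s := ((k - 1) / (k - x)).re
  have hs : (k - 1) / (k - x) = s := Complex.ext rfl (by simpa using (nonpos_iff.1 hle).2)
  have hs0 : s ≤ 0 := (nonpos_iff.1 hle).1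
  have hk' : k = ((1 - s * x) / (1 - s) : ℝ) := by
    rw [div_eq_iff hkx] at hs
    push_cast
    rw [eq_div_iff (by exact_mod_cast (by linarith : (1 : ℝ) - s ≠ 0))]
    linear_combination hs
  refine hk ⟨(1 - s * x) / (1 - s), ⟨?_, ?_⟩, hk'.symm⟩
  · exact div_nonneg (by nlinarith [hx.1]) (by linarith)
  · rw [div_le_one (by linarith)]
    nlinarith [hx.2]

lemma continuousOn_lam_zero {k : ℂ} (hk : k ∉ seg01) :
    ContinuousOn (fun x : ℝ => lam x 0 k) (Icc 0 1) := by
  simp only [lam, ofReal_zero, sub_zero]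
  exact (continuousOn_const.div (continuousOn_const.sub continuous_ofReal.continuousOn)
    fun x hx => sub_ofReal_ne_zero_of_notMem_seg01 hk hx).cpow_const
    fun x hx => div_mem_slitPlane_of_notMem_seg01 hk hx

-- `U0mat E0 x k` is definitionally `laxMatrix (1 / (2 * Re E0 x)) (E0' x) (lam x 0 k)`.
def laxMatrix (c d l : ℂ) : Matrix (Fin 2) (Fin 2) ℂ :=
  c • !![conj d, l * conj d; l * d, d]

lemma laxMatrix_ofReal_mul (a : ℝ) (c d l : ℂ) :
    laxMatrix c (a * d) l = a • laxMatrix c d l := by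
  ext i j
  fin_cases i <;> fin_cases j <;> simp [laxMatrix] <;> ring

lemma trace_laxMatrix (c d l : ℂ) : (laxMatrix c d l).trace = c * (2 * d.re) := by
  simp only [laxMatrix, Matrix.trace_fin_two, Matrix.smul_apply, smul_eq_mul]
  simp [← mul_add, add_comm (conj d), Complex.add_conj]

lemma ContinuousOn.laxMatrix {s : Set ℝ} {c d l : ℝ → ℂ} (hc : ContinuousOn c s)
    (hd : ContinuousOn d s) (hl : ContinuousOn l s) :
    ContinuousOn (fun t => _root_.laxMatrix (c t) (d t) (l t)) s := by
  have hd' : ContinuousOn (fun t => conj (d t)) s := continuous_conj.comp_continuousOn hd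
  refine continuousOn_pi.2 fun i => continuousOn_pi.2 fun j => ?_
  fin_cases i <;> fin_cases j <;> simp only [_root_.laxMatrix]
  exacts [hc.mul hd', hc.mul (hl.mul hd'), hc.mul (hl.mul hd), hc.mul hd]

lemma HasDerivAt.det_fin_two {𝕜 𝔸 : Type*} [NontriviallyNormedField 𝕜] [NormedCommRing 𝔸]
    [NormedAlgebra 𝕜 𝔸] {Φ : 𝕜 → Matrix (Fin 2) (Fin 2) 𝔸} {A : Matrix (Fin 2) (Fin 2) 𝔸} {x : 𝕜}
    (hΦ : ∀ i j, HasDerivAt (fun t => Φ t i j) ((A * Φ x) i j) x) :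
    HasDerivAt (fun t => (Φ t).det) (A.trace * (Φ x).det) x := by
  have hdet : (fun t => (Φ t).det) =
      (fun t => Φ t 0 0) * (fun t => Φ t 1 1) - (fun t => Φ t 0 1) * (fun t => Φ t 1 0) :=
    funext fun t => Matrix.det_fin_two (Φ t)
  rw [hdet]
  refine (((hΦ 0 0).mul (hΦ 1 1)).sub ((hΦ 0 1).mul (hΦ 1 0))).congr_deriv ?_
  simp only [Matrix.det_fin_two, Matrix.mul_apply, Fin.sum_univ_two, Matrix.trace_fin_two]
  ring

section ErnstData

variable {n : ℕ} {α : ℝ} {E0 : ℝ → ℂ}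

lemma ErnstData.re_ne_zero_s11 (hd : ErnstData n α E0) {x : ℝ} (hx : x ∈ Ico 0 1) :
    ((E0 x).re : ℂ) ≠ 0 :=
  ofReal_ne_zero.2 (hd.2.2.2.2 x hx).ne'

lemma ErnstData.continuousOn_re_s11 (hd : ErnstData n α E0) :
    ContinuousOn (fun t => ((E0 t).re : ℂ)) (Ico 0 1) :=
  (continuous_ofReal.comp continuous_re).comp_continuousOn hd.1

lemma ErnstData.continuousOn_inv_two_re (hd : ErnstData n α E0) :
    ContinuousOn (fun t => 1 / (2 * ((E0 t).re : ℂ))) (Ico 0 1) :=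
  continuousOn_const.div (continuousOn_const.mul hd.continuousOn_re_s11) fun _ hx =>
    mul_ne_zero two_ne_zero (hd.re_ne_zero_s11 hx)

lemma ErnstData.continuousOn_U0mat (hd : ErnstData n α E0) (hn : 1 ≤ n) {k : ℂ}
    (hk : k ∉ seg01) : ContinuousOn (fun t => U0mat E0 t k) (Ioo 0 1) :=
  (hd.continuousOn_inv_two_re.mono Ioo_subset_Ico_self).laxMatrix
    (hd.2.1.continuousOn_deriv_of_isOpen isOpen_Ioo (by exact_mod_cast hn))
    ((continuousOn_lam_zero hk).mono Ioo_subset_Icc_self)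

lemma ErnstData.exists_continuousOn_rpow_smul_U0mat (hd : ErnstData n α E0) {k : ℂ}
    (hk : k ∉ seg01) : ∃ G : ℝ → Matrix (Fin 2) (Fin 2) ℂ,
      ContinuousOn G (Ico 0 1) ∧ ∀ t ∈ Ioo (0 : ℝ) 1, G t = t ^ α • U0mat E0 t k := by
  obtain ⟨g, hgc, hg⟩ := hd.2.2.1
  refine ⟨fun t => laxMatrix (1 / (2 * ((E0 t).re : ℂ))) (g t) (lam t 0 k),
    hd.continuousOn_inv_two_re.laxMatrix hgc ((continuousOn_lam_zero hk).mono Ico_subset_Icc_self),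
    fun t ht => ?_⟩
  simp only [hg t ht, laxMatrix_ofReal_mul]
  rfl

lemma ErnstData.trace_U0mat (hd : ErnstData n α E0) {x : ℝ} (hx : x ∈ Ico 0 1) (k : ℂ) :
    (U0mat E0 x k).trace = (deriv E0 x).re / (E0 x).re := by
  have := hd.re_ne_zero_s11 hx
  refine (trace_laxMatrix _ _ _).trans ?_
  field_simp

end ErnstData

lemma HasDerivAt.ofReal_re {f : ℝ → ℂ} {f' : ℂ} {x : ℝ} (hf : HasDerivAt f f' x) :
    HasDerivAt (fun t => ((f t).re : ℂ)) f'.re x :=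
  (reCLM.hasFDerivAt.comp_hasDerivAt x hf).ofReal_comp

def IsU0VolterraSolution (E0 : ℝ → ℂ) (k : ℂ) (Φ0 : ℝ → Matrix (Fin 2) (Fin 2) ℂ) : Prop :=
  ContinuousOn Φ0 (Ico 0 1) ∧ ∀ x ∈ Ico (0:ℝ) 1, ∀ i j, Φ0 x i j =
    (1 : Matrix (Fin 2) (Fin 2) ℂ) i j + ∫ t in (0:ℝ)..x, (U0mat E0 t k * Φ0 t) i j

namespace IsU0VolterraSolution

variable {n : ℕ} {α : ℝ} {E0 : ℝ → ℂ} {k : ℂ} {Φ0 : ℝ → Matrix (Fin 2) (Fin 2) ℂ}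

lemma apply_zero (hΦ : IsU0VolterraSolution E0 k Φ0) : Φ0 0 = 1 := by
  ext i j
  rw [hΦ.2 0 (left_mem_Ico.2 one_pos) i j, intervalIntegral.integral_same, add_zero]

lemma hasDerivAt_apply (hΦ : IsU0VolterraSolution E0 k Φ0) (hd : ErnstData n α E0)
    (hn : 1 ≤ n) (hα : α < 1) (hk : k ∉ seg01) {x : ℝ} (hx : x ∈ Ioo 0 1) (i j : Fin 2) :
    HasDerivAt (fun t => Φ0 t i j) ((U0mat E0 x k * Φ0 x) i j) x := by
  have hF : ContinuousOn (fun t => (U0mat E0 t k * Φ0 t) i j) (Ioo 0 1) :=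
    (continuous_id.matrix_elem i j).comp_continuousOn
      ((hd.continuousOn_U0mat hn hk).mul (hΦ.1.mono Ioo_subset_Ico_self))
  obtain ⟨G, hGc, hG⟩ := hd.exists_continuousOn_rpow_smul_U0mat hk
  have hint : IntervalIntegrable (fun t => (U0mat E0 t k * Φ0 t) i j) volume 0 x := by
    refine intervalIntegrable_of_rpow_smul hα hx.1.le
      ((continuous_id.matrix_elem i j).comp_continuousOn
        ((hGc.mul hΦ.1).mono fun t ht => ⟨ht.1, ht.2.trans_lt hx.2⟩)) fun t ht => ?_
    simp only [Function.comp_apply, id, Pi.mul_apply, hG t ⟨ht.1, ht.2.trans_lt hx.2⟩,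
      Matrix.smul_mul, Matrix.smul_apply]
  exact hasDerivAt_of_eq_add_integral hF hint
    (fun t ht => hΦ.2 t (Ioo_subset_Ico_self ht) i j) hx

lemma hasDerivAt_det_div_re (hΦ : IsU0VolterraSolution E0 k Φ0) (hd : ErnstData n α E0)
    (hn : 1 ≤ n) (hα : α < 1) (hk : k ∉ seg01) {x : ℝ} (hx : x ∈ Ioo 0 1) :
    HasDerivAt (fun t => (Φ0 t).det / (E0 t).re) 0 x := by
  have hdet := HasDerivAt.det_fin_two (hΦ.hasDerivAt_apply hd hn hα hk hx)
  rw [hd.trace_U0mat (Ioo_subset_Ico_self hx)] at hdet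
  have hE0 := ((hd.2.1.differentiableOn (by norm_cast; omega)).differentiableAt
    (isOpen_Ioo.mem_nhds hx)).hasDerivAt.ofReal_re
  have hre := hd.re_ne_zero_s11 (Ioo_subset_Ico_self hx)
  refine (hdet.div hE0 hre).congr_deriv ?_
  field_simp
  ring

end IsU0VolterraSolution

/-- The determinant of the eigenfunction Φ0 of the x-part of the Lax pair
equals Re ℰ0(x). -/
theorem volterra_xpart_det
    (n : ℕ) (hn : 2 ≤ n) (α : ℝ) (hα : α ∈ Ico (0:ℝ) 1)
    (E0 : ℝ → ℂ) (hd0 : ErnstData n α E0)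
    (k : ℂ) (hk : k ∉ seg01)
    (Φ0 : ℝ → Matrix (Fin 2) (Fin 2) ℂ)
    (hΦc : ContinuousOn Φ0 (Ico 0 1))
    (hΦeq : ∀ x ∈ Ico (0:ℝ) 1, ∀ i j, Φ0 x i j =
      (1 : Matrix (Fin 2) (Fin 2) ℂ) i j + ∫ t in (0:ℝ)..x, (U0mat E0 t k * Φ0 t) i j) :
    ∀ x ∈ Ico (0:ℝ) 1, (Φ0 x).det = ((E0 x).re : ℂ) := by
  have hΦ : IsU0VolterraSolution E0 k Φ0 := ⟨hΦc, hΦeq⟩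
  have hcont : ContinuousOn (fun t => (Φ0 t).det / (E0 t).re) (Ico 0 1) :=
    (continuous_id.matrix_det.comp_continuousOn hΦc).div hd0.continuousOn_re_s11
      fun _ ht => hd0.re_ne_zero_s11 ht
  intro x hx
  have hconst := hcont.eq_left_of_hasDerivAt_zero
    (fun t ht => hΦ.hasDerivAt_det_div_re hd0 (by omega) hα.2 hk ht) x hx
  rwa [hΦ.apply_zero, Matrix.det_one, hd0.2.2.2.1, one_re, ofReal_one, div_one,
    div_eq_one_iff_eq (hd0.re_ne_zero_s11 hx)] at hconst
end
end

section
/- Let n ≥ 2 be an integer and α ∈ [0,1). Let V be a C^n-solution of the Goursat problem for the Euler–Darboux equation in D with data {V0, V1}, where V0, V1 ∈ C([0,1)) ∩ C^n((0,1)) are real-valued, x^α V0'(x) and y^α V1'(y) extend continuously to [0,1), and V0(0) = V1(0) = 0. Then for every (x,y) ∈ D, the integrals ∫_0^x V_x(x',0) dx' and ∫_0^y V_y(x,y') dy' converge absolutely and V(x,y) = ∫_0^x V_x(x',0) dx' + ∫_0^y V_y(x,y') dy'. -/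
open Complex Set MeasureTheory Topology Filter ComplexConjugate

noncomputable section

/-!
Along each of the two segments `[0,x] × {0}` and `{x} × [0,y]` the function `V` is continuous and
differentiable in the interior, and its derivative is `t ^ (-β)` times a function continuous up to
the endpoint, for some `β < 1`: on the boundary of `D` this comes from the data `V0`, `V1`, in the
interior of `D` from the regularity of the solution. Such a derivative is integrable because
`t ^ (-β)` is, so the fundamental theorem of calculus applies on both segments, and the two
increments add up to `V x y - V 0 0 = V x y`.
-/

lemma intervalIntegrable_of_rpow_mul_eq_s15 {β b : ℝ} {φ G : ℝ → ℝ} (hb : 0 ≤ b) (hβ : β < 1)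
    (hG : ContinuousOn G (Icc 0 b)) (hφ : ∀ t ∈ Ioo 0 b, t ^ β * φ t = G t) :
    IntervalIntegrable φ volume 0 b := by
  have hpow : IntegrableOn (fun t : ℝ => t ^ (-β)) (Icc 0 b) :=
    (intervalIntegrable_iff_integrableOn_Icc_of_le hb).1
      (intervalIntegral.intervalIntegrable_rpow' (by linarith))
  rw [intervalIntegrable_iff_integrableOn_Ioo_of_le hb]
  refine ((hpow.mul_continuousOn hG isCompact_Icc).mono_set Ioo_subset_Icc_self).congr_fun
    (fun t ht => ?_) measurableSet_Ioo
  show t ^ (-β) * G t = φ t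
  rw [← hφ t ht, ← mul_assoc, ← Real.rpow_add ht.1, neg_add_cancel, Real.rpow_zero, one_mul]

lemma integral_deriv_eq_sub_of_rpow_mul_deriv_eq {β b : ℝ} {f G : ℝ → ℝ} (hb : 0 ≤ b)
    (hβ : β < 1) (hf : ContinuousOn f (Icc 0 b)) (hdf : ∀ t ∈ Ioo 0 b, DifferentiableAt ℝ f t)
    (hG : ContinuousOn G (Icc 0 b)) (hfG : ∀ t ∈ Ioo 0 b, t ^ β * deriv f t = G t) :
    IntervalIntegrable (deriv f) volume 0 b ∧ ∫ t in (0:ℝ)..b, deriv f t = f b - f 0 := by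
  have hint := intervalIntegrable_of_rpow_mul_eq_s15 hb hβ hG hfG
  exact ⟨hint, intervalIntegral.integral_eq_sub_of_hasDeriv_right_of_le hb hf
    (fun t ht => (hdf t ht).hasDerivAt.hasDerivWithinAt) hint⟩

lemma EDData.integral_deriv_eq_sub {n : ℕ} {α b : ℝ} {V0 f : ℝ → ℝ} (hn : 1 ≤ n) (hα : α < 1)
    (hd : EDData n α V0) (hfV : EqOn f V0 (Ico 0 1)) (hb : b ∈ Ico (0:ℝ) 1) :
    IntervalIntegrable (deriv f) volume 0 b ∧ ∫ t in (0:ℝ)..b, deriv f t = f b - f 0 := by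
  obtain ⟨hcont, hsmooth, ⟨G, hGc, hG⟩, -⟩ := hd
  have hIcc : Icc 0 b ⊆ Ico 0 1 := Icc_subset_Ico_right hb.2
  have hIoo : Ioo 0 b ⊆ Ioo 0 1 := Ioo_subset_Ioo_right hb.2.le
  have hfV_nhds : ∀ t ∈ Ioo (0:ℝ) 1, f =ᶠ[𝓝 t] V0 := fun t ht =>
    Filter.mem_of_superset (isOpen_Ioo.mem_nhds ht) fun s hs => hfV (Ioo_subset_Ico_self hs)
  refine integral_deriv_eq_sub_of_rpow_mul_deriv_eq hb.1 hα
    ((hcont.mono hIcc).congr (hfV.mono hIcc)) (fun t ht => ?_) (hGc.mono hIcc) (fun t ht => ?_)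
  · have hV0 : DifferentiableAt ℝ V0 t :=
      (hsmooth.contDiffAt (isOpen_Ioo.mem_nhds (hIoo ht))).differentiableAt
        (by exact_mod_cast Nat.one_le_iff_ne_zero.1 hn)
    exact hV0.congr_of_eventuallyEq (hfV_nhds t (hIoo ht))
  · rw [(hfV_nhds t (hIoo ht)).deriv_eq, hG t (hIoo ht)]

lemma mem_interior_TriD_s15 {a b : ℝ} (ha : 0 < a) (hb : 0 < b) (hab : a + b < 1) :
    (a, b) ∈ interior TriD := by
  refine interior_maximal (t := {p : ℝ × ℝ | 0 < p.1 ∧ 0 < p.2 ∧ p.1 + p.2 < 1})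
    (fun _ hp => show _ ∈ TriD from ⟨hp.1.le, hp.2.1.le, hp.2.2⟩) ?_ ⟨ha, hb, hab⟩
  exact (isOpen_lt continuous_const continuous_fst).inter
    ((isOpen_lt continuous_const continuous_snd).inter
      (isOpen_lt (continuous_fst.add continuous_snd) continuous_const))

lemma mapsTo_vertical_segment_TriD {x y : ℝ} (hxy : (x, y) ∈ TriD) :
    MapsTo (fun t : ℝ => (x, t)) (Icc 0 y) TriD :=
  fun t ht => show (x, t) ∈ TriD from ⟨hxy.1, ht.1, by linarith [ht.2, hxy.2.2]⟩

lemma EDSolutionWith.integral_pdyR_eq_sub {n : ℕ} {α x y : ℝ} {V : ℝ → ℝ → ℝ} {V0 V1 : ℝ → ℝ}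
    (hn : 1 ≤ n) (hα : α < 1) (hV : EDSolutionWith n α V V0 V1) (hx : 0 < x)
    (hxy : (x, y) ∈ TriD) :
    IntervalIntegrable (fun y' => pdyR V x y') volume 0 y ∧
      ∫ y' in (0:ℝ)..y, pdyR V x y' = V x y - V x 0 := by
  obtain ⟨hcont, hsmooth, -, -, ⟨G, hGc, hG⟩, -⟩ := hV
  have hseg := mapsTo_vertical_segment_TriD hxy
  have hsegc : ContinuousOn (fun t : ℝ => (x, t)) (Icc 0 y) := by fun_prop
  have hint : ∀ t ∈ Ioo 0 y, (x, t) ∈ interior TriD := fun t ht =>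
    mem_interior_TriD_s15 hx ht.1 (by linarith [ht.2, hxy.2.2])
  refine integral_deriv_eq_sub_of_rpow_mul_deriv_eq hxy.2.1 hα (hcont.comp hsegc hseg)
    (fun t ht => ?_) (hGc.comp hsegc hseg) (fun t ht => (hG _ (hint t ht)).symm)
  have hVd : DifferentiableAt ℝ (fun p : ℝ × ℝ => V p.1 p.2) (x, t) :=
    (hsmooth.contDiffAt (isOpen_interior.mem_nhds (hint t ht))).differentiableAt
      (by exact_mod_cast Nat.one_le_iff_ne_zero.1 hn)
  exact hVd.comp t (by fun_prop)

/-- For a solution of the Euler–Darboux Goursat problem,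
V(x,y) = ∫_0^x V_x(x',0) dx' + ∫_0^y V_y(x,y') dy', with absolutely convergent
integrals. -/
theorem eulerDarboux_fundamental_theorem
    (n : ℕ) (hn : 2 ≤ n) (α : ℝ) (hα : α ∈ Ico (0:ℝ) 1)
    (V0 V1 : ℝ → ℝ) (hd0 : EDData n α V0) (hd1 : EDData n α V1)
    (V : ℝ → ℝ → ℝ) (hV : EDSolution n V V0 V1)
    (x y : ℝ) (hxy : (x, y) ∈ TriD) :
    IntervalIntegrable (fun x' => pdxR V x' 0) volume 0 x ∧
    IntervalIntegrable (fun y' => pdyR V x y') volume 0 y ∧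
    V x y = (∫ x' in (0:ℝ)..x, pdxR V x' 0) + ∫ y' in (0:ℝ)..y, pdyR V x y' := by
  obtain ⟨β, hβ, hVβ⟩ := hV
  have ⟨_, _, _, _, _, _, hV_bottom, hV_left⟩ := hVβ
  have hn1 : 1 ≤ n := by omega
  have hbottom : IntervalIntegrable (fun x' => pdxR V x' 0) volume 0 x ∧
      ∫ x' in (0:ℝ)..x, pdxR V x' 0 = V x 0 - V 0 0 :=
    hd0.integral_deriv_eq_sub hn1 hα.2 hV_bottom ⟨hxy.1, by linarith [hxy.2.1, hxy.2.2]⟩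
  have hvertical : IntervalIntegrable (fun y' => pdyR V x y') volume 0 y ∧
      ∫ y' in (0:ℝ)..y, pdyR V x y' = V x y - V x 0 := by
    rcases hxy.1.eq_or_lt with rfl | hx
    · exact hd1.integral_deriv_eq_sub hn1 hα.2 hV_left ⟨hxy.2.1, by linarith [hxy.2.2]⟩
    · exact hVβ.integral_pdyR_eq_sub hn1 hβ.2 hx hxy
  have hV00 : V 0 0 = 0 := (hV_bottom 0 ⟨le_rfl, one_pos⟩).trans hd0.2.2.2
  exact ⟨hbottom.1, hvertical.1, by linarith [hbottom.2, hvertical.2]⟩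
end
end

section
/- Define ℰ : Int D → ℂ by ℰ(x,y) = (1 + √x √(1−y) + √y √(1−x)) / (1 − √x √(1−y) − √y √(1−x)) (the Khan–Penrose solution). Then √x √(1−y) + √y √(1−x) < 1 for all (x,y) ∈ Int D, so ℰ is well defined, and ℰ satisfies the hyperbolic Ernst equation at every point of Int D; moreover Re ℰ > 0 on Int D, and for each y ∈ [0,1): lim_{x↓0} √x · ℰ_x(x,y) = √(1−y)/(1−√y)², and for each x ∈ [0,1): lim_{y↓0} √y · ℰ_y(x,y) = √(1−x)/(1−√x)². -/
open Complex Set MeasureTheory Topology Filter ComplexConjugate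

noncomputable section

/-- The Khan–Penrose Ernst potential. -/
def KhanPenrose (x y : ℝ) : ℂ :=
  ((1 + (Real.sqrt x * Real.sqrt (1 - y) + Real.sqrt y * Real.sqrt (1 - x)) : ℝ) : ℂ) /
    ((1 - (Real.sqrt x * Real.sqrt (1 - y) + Real.sqrt y * Real.sqrt (1 - x)) : ℝ) : ℂ)

/-!
Put `u = √x`, `p = √(1 - x)`, `v = √y`, `q = √(1 - y)` and `s = u q + v p`, so that
`ℰ = (1 + s) / (1 - s)` is real (with `x = sin² a`, `y = sin² b` one has `s = sin (a + b)`).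
Lagrange's identity `s² + (p q - u v)² = (u² + p²) (v² + q²) = 1` gives `s < 1`, since
`p q > u v` is exactly `x + y < 1`. For a real potential `ℰ = (1 + s) / (1 - s)` the Ernst
equation reduces to the two identities `s_x + s_y = -2 (1 - x - y) s_xy` (the Euler–Darboux
equation) and `(1 - s²) s_xy = -s s_x s_y`; in the variables `u, p, v, q` both are polynomial
identities modulo `u² + p² = v² + q² = 1`.
-/

theorem cayley_ernst_identity {s sx sy sxy r : ℝ} (hs : 1 - s ≠ 0) (hr : r ≠ 0)
    (hED : sx + sy = -(2 * r * sxy)) (hsq : (1 - s ^ 2) * sxy = -(s * sx * sy)) :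
    (1 + s) / (1 - s) * ((2 * sxy / (1 - s) ^ 2 + 4 * sx * sy / (1 - s) ^ 3)
        - (2 * sx / (1 - s) ^ 2 + 2 * sy / (1 - s) ^ 2) / (2 * r))
      = 2 * sx / (1 - s) ^ 2 * (2 * sy / (1 - s) ^ 2) := by
  field_simp
  linear_combination (s ^ 2 - 1) * hED + 4 * r * hsq

theorem mul_add_mul_sq_add_sub_mul_sq_eq_one {u p v q : ℝ} (hup : u ^ 2 + p ^ 2 = 1)
    (hvq : v ^ 2 + q ^ 2 = 1) :
    (u * q + v * p) ^ 2 + (p * q - u * v) ^ 2 = 1 := by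
  linear_combination (q ^ 2 + v ^ 2) * hup + hvq

theorem circle_eulerDarboux_identity {u p v q : ℝ} (hu : u ≠ 0) (hp : p ≠ 0) (hv : v ≠ 0)
    (hq : q ≠ 0)     (hup : u ^ 2 + p ^ 2 = 1) (hvq : v ^ 2 + q ^ 2 = 1) :
    (q / (2 * u) - v / (2 * p)) + (p / (2 * v) - u / (2 * q))
      = -(2 * (q ^ 2 - u ^ 2) * -(1 / (4 * u * q) + 1 / (4 * v * p))) := by
  field_simp
  linear_combination 4 * q * u * (hup - hvq)

theorem circle_ernst_identity {u p v q : ℝ} (hu : u ≠ 0) (hp : p ≠ 0) (hv : v ≠ 0)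
    (hq : q ≠ 0)     (hup : u ^ 2 + p ^ 2 = 1) (hvq : v ^ 2 + q ^ 2 = 1) :
    (1 - (u * q + v * p) ^ 2) * -(1 / (4 * u * q) + 1 / (4 * v * p))
      = -((u * q + v * p) * (q / (2 * u) - v / (2 * p)) * (p / (2 * v) - u / (2 * q))) := by
  field_simp
  linear_combination 4 * (u * q + v * p) * ((v ^ 2 + q ^ 2) * hup + hvq)

theorem sq_sqrt_add_sq_sqrt_one_sub {x : ℝ} (h0 : 0 ≤ x) (h1 : x ≤ 1) :
    √x ^ 2 + √(1 - x) ^ 2 = 1 := by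
  rw [Real.sq_sqrt h0, Real.sq_sqrt (by linarith)]; ring

theorem HasDerivAt.one_add_div_one_sub {f : ℝ → ℝ} {f' x : ℝ} (hf : HasDerivAt f f' x)
    (hx : 1 - f x ≠ 0) :
    HasDerivAt (fun t => (1 + f t) / (1 - f t)) (2 * f' / (1 - f x) ^ 2) x := by
  refine ((hf.const_add 1).div (hf.const_sub 1) hx).congr_deriv ?_
  field_simp
  ring

theorem hasDerivAt_sqrt_one_sub {x : ℝ} (hx : x < 1) :
    HasDerivAt (fun t => √(1 - t)) (-(1 / (2 * √(1 - x)))) x := by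
  refine ((Real.hasDerivAt_sqrt (sub_ne_zero.2 hx.ne')).comp x
    ((hasDerivAt_id x).const_sub 1)).congr_deriv ?_
  simp

-- `kpSdx x y = ∂ₓ kpS x y`, `kpSdx y x = ∂ᵧ kpS x y` and `kpSdxdy x y = ∂ₓ∂ᵧ kpS x y`.
def kpS (x y : ℝ) : ℝ := √x * √(1 - y) + √y * √(1 - x)

def kpSdx (x y : ℝ) : ℝ := √(1 - y) / (2 * √x) - √y / (2 * √(1 - x))

def kpSdxdy (x y : ℝ) : ℝ := -(1 / (4 * √x * √(1 - y)) + 1 / (4 * √y * √(1 - x)))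

theorem kpS_comm (x y : ℝ) : kpS x y = kpS y x := by
  unfold kpS; ring

theorem kpS_nonneg (x y : ℝ) : 0 ≤ kpS x y := by
  unfold kpS; positivity

theorem kpS_lt_one {x y : ℝ} (hx : 0 ≤ x) (hy : 0 ≤ y) (hxy : x + y < 1) : kpS x y < 1 := by
  have hlt : √x * √y < √(1 - x) * √(1 - y) := by
    rw [← Real.sqrt_mul hx, ← Real.sqrt_mul (by linarith)]
    exact Real.sqrt_lt_sqrt (by positivity) (by nlinarith)
  have hsq : kpS x y ^ 2 + (√(1 - x) * √(1 - y) - √x * √y) ^ 2 = 1 :=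
    mul_add_mul_sq_add_sub_mul_sq_eq_one (sq_sqrt_add_sq_sqrt_one_sub hx (by linarith))
      (sq_sqrt_add_sq_sqrt_one_sub hy (by linarith))
  nlinarith [kpS_nonneg x y]

theorem KhanPenrose_eq (x y : ℝ) : KhanPenrose x y = ((1 + kpS x y) / (1 - kpS x y) : ℝ) := by
  rw [Complex.ofReal_div]; rfl

theorem KhanPenrose_comm (x y : ℝ) : KhanPenrose x y = KhanPenrose y x := by
  rw [KhanPenrose_eq, KhanPenrose_eq, kpS_comm]

theorem hasDerivAt_kpS_fst (y : ℝ) {x : ℝ} (hx : 0 < x) (hx1 : x < 1) :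
    HasDerivAt (kpS · y) (kpSdx x y) x := by
  refine (((Real.hasDerivAt_sqrt hx.ne').mul_const √(1 - y)).add
    ((hasDerivAt_sqrt_one_sub hx1).const_mul √y)).congr_deriv ?_
  unfold kpSdx; ring

theorem hasDerivAt_kpSdx_snd (y : ℝ) {x : ℝ} (hx : 0 < x) (hx1 : x < 1) :
    HasDerivAt (kpSdx y ·) (kpSdxdy x y) x := by
  refine (((hasDerivAt_sqrt_one_sub hx1).div_const (2 * √y)).sub
    ((Real.hasDerivAt_sqrt hx.ne').div_const (2 * √(1 - y)))).congr_deriv ?_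
  unfold kpSdxdy; ring

theorem pdx_KhanPenrose {x y : ℝ} (hx : 0 < x) (hy : 0 ≤ y) (hxy : x + y < 1) :
    pdx KhanPenrose x y = (2 * kpSdx x y / (1 - kpS x y) ^ 2 : ℝ) := by
  have hs : 1 - kpS x y ≠ 0 := (sub_pos.2 (kpS_lt_one hx.le hy hxy)).ne'
  simp only [pdx, KhanPenrose_eq]
  exact ((hasDerivAt_kpS_fst y hx (by linarith)).one_add_div_one_sub hs).ofReal_comp.deriv

theorem pdy_KhanPenrose_eq_pdx (x y : ℝ) : pdy KhanPenrose x y = pdx KhanPenrose y x := by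
  simp only [pdx, pdy, KhanPenrose_comm x]

theorem pdy_KhanPenrose {x y : ℝ} (hx : 0 ≤ x) (hy : 0 < y) (hxy : x + y < 1) :
    pdy KhanPenrose x y = (2 * kpSdx y x / (1 - kpS x y) ^ 2 : ℝ) := by
  rw [pdy_KhanPenrose_eq_pdx, pdx_KhanPenrose hy hx (by linarith), kpS_comm]

theorem pdxy_KhanPenrose {x y : ℝ} (hx : 0 < x) (hy : 0 < y) (hxy : x + y < 1) :
    pdxy KhanPenrose x y = (2 * kpSdxdy x y / (1 - kpS x y) ^ 2
      + 4 * kpSdx x y * kpSdx y x / (1 - kpS x y) ^ 3 : ℝ) := by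
  have hs : 1 - kpS x y ≠ 0 := (sub_pos.2 (kpS_lt_one hx.le hy.le hxy)).ne'
  have hpdy : (pdy KhanPenrose · y) =ᶠ[𝓝 x]
      fun t => ((2 * kpSdx y t / (1 - kpS t y) ^ 2 : ℝ) : ℂ) := by
    filter_upwards [Ioo_mem_nhds hx (by linarith : x < 1 - y)] with t ht
    exact pdy_KhanPenrose ht.1.le hy (by linarith [ht.2])
  have hderiv : HasDerivAt (fun t => 2 * kpSdx y t / (1 - kpS t y) ^ 2)
      (2 * kpSdxdy x y / (1 - kpS x y) ^ 2
        + 4 * kpSdx x y * kpSdx y x / (1 - kpS x y) ^ 3) x := by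
    refine (((hasDerivAt_kpSdx_snd y hx (by linarith)).const_mul 2).div
      (((hasDerivAt_kpS_fst y hx (by linarith)).const_sub 1).fun_pow 2)
      (pow_ne_zero 2 hs)).congr_deriv ?_
    field_simp
    ring
  rw [pdxy, pdx, hpdy.deriv_eq]
  exact hderiv.ofReal_comp.deriv

theorem ernstEqAt_KhanPenrose {x y : ℝ} (hx : 0 < x) (hy : 0 < y) (hxy : x + y < 1) :
    ErnstEqAt KhanPenrose x y := by
  have h1x : 0 < 1 - x := by linarith
  have h1y : 0 < 1 - y := by linarith
  have hu := (Real.sqrt_pos.2 hx).ne'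
  have hv := (Real.sqrt_pos.2 hy).ne'
  have hp := (Real.sqrt_pos.2 h1x).ne'
  have hq := (Real.sqrt_pos.2 h1y).ne'
  have hup := sq_sqrt_add_sq_sqrt_one_sub hx.le (by linarith)
  have hvq := sq_sqrt_add_sq_sqrt_one_sub hy.le (by linarith)
  have hED : kpSdx x y + kpSdx y x = -(2 * (1 - x - y) * kpSdxdy x y) := by
    have h := circle_eulerDarboux_identity hu hp hv hq hup hvq
    rwa [Real.sq_sqrt h1y.le, Real.sq_sqrt hx.le, sub_right_comm] at h
  have hsq : (1 - kpS x y ^ 2) * kpSdxdy x y = -(kpS x y * kpSdx x y * kpSdx y x) :=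
    circle_ernst_identity hu hp hv hq hup hvq
  have hs : 1 - kpS x y ≠ 0 := (sub_pos.2 (kpS_lt_one hx.le hy.le hxy)).ne'
  rw [ErnstEqAt, pdx_KhanPenrose hx hy.le hxy, pdy_KhanPenrose hx.le hy hxy,
    pdxy_KhanPenrose hx hy hxy, KhanPenrose_eq, Complex.ofReal_re,
    show 2 * (1 - (x : ℂ) - y) = ((2 * (1 - x - y) : ℝ) : ℂ) by push_cast; ring]
  exact_mod_cast cayley_ernst_identity hs (by linarith) hED hsq

theorem re_KhanPenrose_pos {x y : ℝ} (hx : 0 ≤ x) (hy : 0 ≤ y) (hxy : x + y < 1) :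
    0 < (KhanPenrose x y).re := by
  rw [KhanPenrose_eq, Complex.ofReal_re]
  have := kpS_lt_one hx hy hxy
  have := kpS_nonneg x y
  exact div_pos (by linarith) (by linarith)

theorem interior_TriD_subset :
    interior TriD ⊆ {p : ℝ × ℝ | 0 < p.1 ∧ 0 < p.2 ∧ p.1 + p.2 < 1} := by
  intro p hp
  have h : p ∈ interior (Ici 0 ×ˢ Ici 0) :=
    interior_mono (fun q hq => mem_prod.2 ⟨hq.1, hq.2.1⟩) hp
  rw [interior_prod_eq, interior_Ici] at h
  exact ⟨h.1, h.2, (interior_subset hp).2.2⟩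

theorem tendsto_sqrt_mul_pdx_KhanPenrose {y : ℝ} (hy : 0 ≤ y) (hy1 : y < 1) :
    Tendsto (fun x : ℝ => ((√x : ℝ) : ℂ) * pdx KhanPenrose x y) (𝓝[>] 0)
      (𝓝 ((√(1 - y) / (1 - √y) ^ 2 : ℝ) : ℂ)) := by
  set F : ℝ → ℝ := fun x => (√(1 - y) - √x * √y / √(1 - x)) / (1 - kpS x y) ^ 2
  have hF0 : F 0 = √(1 - y) / (1 - √y) ^ 2 := by simp [F, kpS]
  have hF : ContinuousAt F 0 := by
    have : 1 - √y ≠ 0 := (sub_pos.2 ((Real.sqrt_lt' one_pos).2 (by linarith))).ne'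
    unfold F kpS
    fun_prop (disch := simp [this])
  have hEq : ∀ᶠ x in 𝓝[>] 0, ((F x : ℝ) : ℂ) = √x * pdx KhanPenrose x y := by
    filter_upwards [Ioo_mem_nhdsGT (by linarith : (0:ℝ) < 1 - y)] with x hx
    have := (Real.sqrt_pos.2 hx.1).ne'
    have := (Real.sqrt_pos.2 (by linarith [hx.2] : 0 < 1 - x)).ne'
    rw [pdx_KhanPenrose hx.1 hy (by linarith [hx.2]), ← Complex.ofReal_mul]
    congr 1
    simp only [F, kpSdx]
    field_simp
  rw [← hF0]
  exact ((Complex.continuous_ofReal.continuousAt.comp hF).tendsto.mono_left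
    nhdsWithin_le_nhds).congr' hEq

/-- The Khan–Penrose potential is well defined on Int D, solves the
hyperbolic Ernst equation there, has positive real part, and has the stated boundary
behavior. -/
theorem khanPenrose_solution :
    (∀ p ∈ interior TriD,
      Real.sqrt p.1 * Real.sqrt (1 - p.2) + Real.sqrt p.2 * Real.sqrt (1 - p.1) < 1) ∧
    (∀ p ∈ interior TriD, ErnstEqAt KhanPenrose p.1 p.2) ∧
    (∀ p ∈ interior TriD, 0 < (KhanPenrose p.1 p.2).re) ∧
    (∀ y ∈ Ico (0:ℝ) 1,
      Tendsto (fun x : ℝ => ((Real.sqrt x : ℝ) : ℂ) * pdx KhanPenrose x y) (𝓝[>] 0)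
        (𝓝 ((Real.sqrt (1 - y) / (1 - Real.sqrt y) ^ 2 : ℝ) : ℂ))) ∧
    (∀ x ∈ Ico (0:ℝ) 1,
      Tendsto (fun y : ℝ => ((Real.sqrt y : ℝ) : ℂ) * pdy KhanPenrose x y) (𝓝[>] 0)
        (𝓝 ((Real.sqrt (1 - x) / (1 - Real.sqrt x) ^ 2 : ℝ) : ℂ))) := by
  refine ⟨fun p hp => ?_, fun p hp => ?_, fun p hp => ?_,
    fun y hy => tendsto_sqrt_mul_pdx_KhanPenrose hy.1 hy.2, fun x hx => ?_⟩
  · obtain ⟨hx, hy, hxy⟩ := interior_TriD_subset hp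
    exact kpS_lt_one hx.le hy.le hxy
  · obtain ⟨hx, hy, hxy⟩ := interior_TriD_subset hp
    exact ernstEqAt_KhanPenrose hx hy hxy
  · obtain ⟨hx, hy, hxy⟩ := interior_TriD_subset hp
    exact re_KhanPenrose_pos hx.le hy.le hxy
  · simpa only [pdy_KhanPenrose_eq_pdx] using tendsto_sqrt_mul_pdx_KhanPenrose hx.1 hx.2
end
end
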